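/- arXiv:2402.08912 — 5 statements merged into one kernel-verified Lean document; each statement's English description precedes it below -/
import Mathlib

section
/- Let k ≥ 1 be an integer and β₁ ≥ 0 a real number. There exists a constant C > 0 depending only on k such that the following holds. Let N ≥ 1, let 0 = x₀ < x₁ < ... < x_N = 1 be any partition with h_j = x_j - x_{j-1}, set Δh_j = min(h_j, h_{j+1}) for 1 ≤ j ≤ N-1, Δh₀ = h₁ and Δh_N = h_N, and let p₁, ..., p_N be real polynomials of degree at most k, with p_j regarded as a function on [x_{j-1}, x_j]. Define at interior nodes x_j (1 ≤ j ≤ N-1): {p'}_j = (p_j'(x_j) + p_{j+1}'(x_j))/2 and [p'']_j = p_{j+1}''(x_j) - p_j''(x_j); at the boundary: {p'}₀ = p₁'(x₀), [p'']₀ = p₁''(x₀), {p'}_N = p_N'(x_N), [p'']_N = -p_N''(x_N). Then ∑_{j=0}^{N} Δh_j ({p'}_j + β₁ Δh_j [p'']_j)² ≤ C (1 + β₁²) ∑_{j=1}^{N} ∫_{x_{j-1}}^{x_j} (p_j'(x))² dx. -/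
open Set Polynomial MeasureTheory


noncomputable def Pc (m : ℕ) (c : Fin (m+1) → ℝ) : ℝ[X] :=
  ∑ i : Fin (m+1), Polynomial.C (c i) * Polynomial.X ^ (i : ℕ)

lemma eval_Pc (m : ℕ) (c : Fin (m+1) → ℝ) (t : ℝ) :
    (Pc m c).eval t = ∑ i : Fin (m+1), c i * t ^ (i : ℕ) := by
  simp [Pc, eval_finset_sum]

lemma deriv_eval_Pc (m : ℕ) (c : Fin (m+1) → ℝ) (t : ℝ) :
    (derivative (Pc m c)).eval t = ∑ i : Fin (m+1), c i * (i : ℕ) * t ^ ((i : ℕ) - 1) := by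
  simp [Pc, derivative_sum, derivative_C_mul_X_pow, derivative_X_pow, eval_finset_sum, mul_assoc]

lemma coeff_Pc (m : ℕ) (c : Fin (m+1) → ℝ) (i : Fin (m+1)) :
    (Pc m c).coeff (i : ℕ) = c i := by
  simp only [Pc, finset_sum_coeff, coeff_C_mul, coeff_X_pow]
  rw [Finset.sum_eq_single i] <;> simp +contextual [Fin.val_eq_val, eq_comm]

lemma Pc_smul (m : ℕ) (a : ℝ) (c : Fin (m+1) → ℝ) : Pc m (a • c) = a • Pc m c := by
  simp [Pc, Finset.smul_sum, smul_eq_C_mul, C_mul, mul_assoc]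

lemma Pc_natDegree (m : ℕ) (c : Fin (m+1) → ℝ) : (Pc m c).natDegree ≤ m := by
  apply Polynomial.natDegree_sum_le_of_forall_le
  intro i _
  calc (C (c i) * X ^ (i:ℕ)).natDegree ≤ (i:ℕ) := natDegree_C_mul_X_pow_le _ _
  _ ≤ m := by omega

lemma Pc_eq (m : ℕ) (r : ℝ[X]) (h : r.natDegree ≤ m) :
    Pc m (fun i => r.coeff i) = r := by
  conv_rhs => rw [r.as_sum_range' (m+1) (by omega)]
  rw [Pc, Fin.sum_univ_eq_sum_range (fun i => Polynomial.C (r.coeff i) * Polynomial.X ^ i)]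
  simp [C_mul_X_pow_eq_monomial]


noncomputable def Psi (m : ℕ) (c : Fin (m+1) → ℝ) : ℝ :=
  ∑ i : Fin (m+1), ∑ j : Fin (m+1), c i * c j * (1 / ((i:ℕ) + (j:ℕ) + 1))

lemma integral_sq (m : ℕ) (c : Fin (m+1) → ℝ) :
    ∫ t in (0:ℝ)..1, (∑ i : Fin (m+1), c i * t ^ (i:ℕ)) ^ 2 = Psi m c := by
  have h : ∀ t : ℝ, (∑ i : Fin (m+1), c i * t ^ (i:ℕ)) ^ 2
      = ∑ i : Fin (m+1), ∑ j : Fin (m+1), (c i * c j) * t ^ ((i:ℕ) + (j:ℕ)) := by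
    intro t
    rw [sq, Finset.sum_mul_sum]
    congr 1; ext i; congr 1; ext j; ring
  simp only [h]
  rw [intervalIntegral.integral_finset_sum]
  · unfold Psi
    congr 1; ext i
    rw [intervalIntegral.integral_finset_sum]
    · congr 1; ext j
      rw [intervalIntegral.integral_const_mul, integral_pow]
      push_cast
      ring
    · intro j _
      exact (Continuous.intervalIntegrable (by continuity) _ _)
  · intro i _
    apply Continuous.intervalIntegrable
    apply continuous_finset_sum
    intro j _
    continuity

lemma Psi_cont (m : ℕ) : Continuous (Psi m) := by
  unfold Psi
  apply continuous_finset_sum; intro i _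
  apply continuous_finset_sum; intro j _
  exact (((continuous_apply i).mul (continuous_apply j)).mul continuous_const)

lemma integral_sq' (m : ℕ) (c : Fin (m+1) → ℝ) :
    ∫ t in (0:ℝ)..1, ((Pc m c).eval t) ^ 2 = Psi m c := by
  simp only [eval_Pc]
  exact integral_sq m c

lemma int_zero (m : ℕ) (c : Fin (m+1) → ℝ)
    (h : ∫ t in (0:ℝ)..1, ((Pc m c).eval t)^2 = 0) : c = 0 := by
  set P := Pc m c with hPdef
  have hcont : Continuous fun t => (P.eval t)^2 := (P.continuous).pow 2
  have h0 : (fun t => (P.eval t)^2) =ᵐ[volume.restrict (Ioc (0:ℝ) 1)] 0 := by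
    rw [← intervalIntegral.integral_eq_zero_iff_of_le_of_nonneg_ae (by norm_num)
      (Filter.Eventually.of_forall fun t => sq_nonneg _)
      (hcont.intervalIntegrable _ _)]
    exact h
  have hP : P = 0 := by
    by_contra hP
    have hnull : volume ({t | (P.eval t)^2 ≠ 0} ∩ Ioc (0:ℝ) 1) = 0 := by
      have := Filter.EventuallyEq.symm h0
      rw [Filter.EventuallyEq, ae_iff] at h0
      rw [Measure.restrict_apply] at h0
      · convert h0 using 2
        rfl
      · exact (isOpen_ne.preimage hcont).measurableSet
    have hZ : Ioc (0:ℝ) 1 ⊆ ({t | IsRoot P t} ∪ ({t | (P.eval t)^2 ≠ 0} ∩ Ioc (0:ℝ) 1)) := by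
      intro t ht
      by_cases he : P.eval t = 0
      · exact Or.inl he
      · exact Or.inr ⟨by simp [pow_eq_zero_iff, he], ht⟩
    have hroots : {t | IsRoot P t}.Finite := by
      rw [← Set.not_infinite]
      intro hinf
      exact hP (P.eq_zero_of_infinite_isRoot hinf)
    have : volume (Ioc (0:ℝ) 1) ≤ 0 := by
      calc volume (Ioc (0:ℝ) 1) ≤ volume ({t | IsRoot P t} ∪ _) := measure_mono hZ
      _ ≤ volume {t | IsRoot P t} + volume ({t | (P.eval t)^2 ≠ 0} ∩ Ioc (0:ℝ) 1) :=
          measure_union_le _ _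
      _ = 0 := by rw [hroots.measure_zero, hnull]; simp
    simp [Real.volume_Ioc] at this
  funext i
  have := coeff_Pc m c i
  rw [← hPdef, hP] at this
  simpa using this.symm

noncomputable def Phi (m : ℕ) (c : Fin (m+1) → ℝ) : ℝ :=
  ((Pc m c).eval 0)^2 + ((Pc m c).eval 1)^2
    + ((derivative (Pc m c)).eval 0)^2 + ((derivative (Pc m c)).eval 1)^2

lemma Phi_cont (m : ℕ) : Continuous (Phi m) := by
  unfold Phi
  simp only [eval_Pc, deriv_eval_Pc]
  fun_prop

lemma Phi_nonneg (m : ℕ) (c : Fin (m+1) → ℝ) : 0 ≤ Phi m c := by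
  unfold Phi; positivity

lemma Phi_smul (m : ℕ) (a : ℝ) (c : Fin (m+1) → ℝ) : Phi m (a • c) = a^2 * Phi m c := by
  unfold Phi
  rw [Pc_smul]
  simp only [derivative_smul, eval_smul, smul_eq_mul]
  ring

lemma Psi_smul (m : ℕ) (a : ℝ) (c : Fin (m+1) → ℝ) : Psi m (a • c) = a^2 * Psi m c := by
  rw [← integral_sq', ← integral_sq', Pc_smul]
  simp only [eval_smul, smul_eq_mul, mul_pow]
  rw [intervalIntegral.integral_const_mul]

lemma Psi_nonneg (m : ℕ) (c : Fin (m+1) → ℝ) : 0 ≤ Psi m c := by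
  rw [← integral_sq']
  apply intervalIntegral.integral_nonneg (by norm_num)
  intro t _; positivity

theorem traceA (m : ℕ) : ∃ C > 0, ∀ r : ℝ[X], r.natDegree ≤ m →
    (r.eval 0)^2 + (r.eval 1)^2 + ((derivative r).eval 0)^2 + ((derivative r).eval 1)^2
      ≤ C * ∫ t in (0:ℝ)..1, (r.eval t)^2 := by
  -- compactness on the unit sphere of Fin (m+1) → ℝ (Euclidean)
  have hPsiE : Continuous fun c : EuclideanSpace ℝ (Fin (m+1)) => Psi m c :=
    (Psi_cont m).comp (PiLp.continuous_ofLp _ _)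
  have hPhiE : Continuous fun c : EuclideanSpace ℝ (Fin (m+1)) => Phi m c :=
    (Phi_cont m).comp (PiLp.continuous_ofLp _ _)
  obtain ⟨cm, hcm_mem, hcm_min⟩ :=
    (isCompact_sphere (0 : EuclideanSpace ℝ (Fin (m+1))) 1).exists_isMinOn
      (NormedSpace.sphere_nonempty.mpr zero_le_one) hPsiE.continuousOn
  obtain ⟨cM, hcM_mem, hcM_max⟩ :=
    (isCompact_sphere (0 : EuclideanSpace ℝ (Fin (m+1))) 1).exists_isMaxOn
      (NormedSpace.sphere_nonempty.mpr zero_le_one) hPhiE.continuousOn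
  set δ : ℝ := Psi m cm with hδdef
  set M : ℝ := Phi m cM with hMdef
  have hδpos : 0 < δ := by
    rcases (Psi_nonneg m cm).lt_or_eq with h | h
    · exact h
    · exfalso
      have hzero : cm = (0 : EuclideanSpace ℝ (Fin (m+1))) :=
        (WithLp.ofLp_eq_zero 2).mp (int_zero m cm (by rw [integral_sq']; exact h.symm))
      have hn := mem_sphere_zero_iff_norm.mp hcm_mem
      rw [hzero] at hn
      simp at hn
  have hMnn : 0 ≤ M := Phi_nonneg m cM
  refine ⟨M / δ + 1, by positivity, fun r hr => ?_⟩
  have key : ∀ c : EuclideanSpace ℝ (Fin (m+1)), Phi m c ≤ (M/δ + 1) * Psi m c := by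
    intro c
    by_cases hc : c = 0
    · subst hc
      have h1 : Phi m (0 : Fin (m+1) → ℝ) = 0 := by
        have := Phi_smul m 0 0; simpa using this
      have h2 : Psi m (0 : Fin (m+1) → ℝ) = 0 := by
        have := Psi_smul m 0 0; simpa using this
      rw [show ((0 : EuclideanSpace ℝ (Fin (m+1))) : Fin (m+1) → ℝ) = 0 from rfl]
      rw [h1, h2]; simp
    · set a := ‖c‖ with ha
      have hapos : 0 < a := norm_pos_iff.mpr hc
      set u : EuclideanSpace ℝ (Fin (m+1)) := a⁻¹ • c with hu
      have hu_mem : u ∈ Metric.sphere (0 : EuclideanSpace ℝ (Fin (m+1))) 1 := by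
        rw [mem_sphere_zero_iff_norm]
        rw [hu, norm_smul]
        simp only [norm_inv, Real.norm_eq_abs, abs_of_pos hapos]
        exact inv_mul_cancel₀ hapos.ne'
      have hc_eq : c = a • u := by
        rw [hu, smul_smul, mul_inv_cancel₀ hapos.ne', one_smul]
      have hPhi : Phi m c = a^2 * Phi m u := by rw [hc_eq]; exact Phi_smul m a u
      have hPsi : Psi m c = a^2 * Psi m u := by rw [hc_eq]; exact Psi_smul m a u
      have h1 : Phi m u ≤ M := hcM_max hu_mem
      have h2 : δ ≤ Psi m u := hcm_min hu_mem
      rw [hPhi, hPsi]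
      calc a^2 * Phi m u ≤ a^2 * M := by nlinarith
      _ = (M/δ) * (a^2 * δ) := by field_simp
      _ ≤ (M/δ + 1) * (a^2 * Psi m u) := by
          apply mul_le_mul (by linarith [div_nonneg hMnn hδpos.le]) (by nlinarith) (by positivity)
          positivity
  have hc := key (WithLp.toLp 2 (fun i => r.coeff i))
  rw [← Pc_eq m r hr]
  unfold Phi at hc
  rw [integral_sq']
  exact hc


theorem traceScaled (m : ℕ) : ∃ C > 0, ∀ (a b : ℝ), a < b → ∀ q : ℝ[X], q.natDegree ≤ m →
    (b-a) * ((q.eval a)^2 + (q.eval b)^2)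
      + (b-a)^3 * (((derivative q).eval a)^2 + ((derivative q).eval b)^2)
      ≤ C * ∫ t in a..b, (q.eval t)^2 := by
  obtain ⟨K, hK, hA⟩ := traceA m
  refine ⟨K, hK, fun a b hab q hq => ?_⟩
  set h : ℝ := b - a with hh
  have hhpos : 0 < h := by simp [hh]; linarith
  set ℓ : ℝ[X] := Polynomial.C a + Polynomial.C h * X with hℓ
  set r : ℝ[X] := q.comp ℓ with hr
  have hℓdeg : ℓ.natDegree = 1 := by
    rw [hℓ]
    compute_degree!
    exact hhpos.ne'
  have hrdeg : r.natDegree ≤ m := by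
    rw [hr, natDegree_comp, hℓdeg, mul_one]; exact hq
  have heval : ∀ t : ℝ, r.eval t = q.eval (h * t + a) := by
    intro t
    rw [hr, eval_comp, hℓ]
    simp only [eval_add, eval_mul, eval_C, eval_X]
    rw [add_comm, mul_comm]
  have hd : ∀ t : ℝ, (derivative r).eval t = h * (derivative q).eval (h * t + a) := by
    intro t
    rw [hr, derivative_comp]
    simp only [eval_mul, eval_comp]
    have : (derivative ℓ).eval t = h := by rw [hℓ]; simp
    rw [this]
    congr 1
    rw [hℓ]
    simp only [eval_add, eval_mul, eval_C, eval_X]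
    rw [add_comm, mul_comm]
  have hint : ∫ t in (0:ℝ)..1, (r.eval t)^2 = h⁻¹ * ∫ s in a..b, (q.eval s)^2 := by
    have h2 := intervalIntegral.integral_comp_mul_add (a := (0:ℝ)) (b := 1)
      (fun s => (q.eval s)^2) hhpos.ne' a
    simp only [mul_zero, zero_add, mul_one] at h2
    simp only [heval]
    rw [h2, smul_eq_mul, show h + a = b by rw [hh]; ring]
  have hr0 : r.eval 0 = q.eval a := by rw [heval]; norm_num
  have hr1 : r.eval 1 = q.eval b := by rw [heval]; rw [hh]; ring_nf
  have hd0 : (derivative r).eval 0 = h * (derivative q).eval a := by rw [hd]; norm_num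
  have hd1 : (derivative r).eval 1 = h * (derivative q).eval b := by
    rw [hd]; rw [show h * 1 + a = b by rw [hh]; ring]
  have key := hA r hrdeg
  rw [hr0, hr1, hd0, hd1, hint] at key
  have hmul := mul_le_mul_of_nonneg_left key hhpos.le
  calc h * ((q.eval a)^2 + (q.eval b)^2)
      + h^3 * (((derivative q).eval a)^2 + ((derivative q).eval b)^2)
      = h * ((q.eval a)^2 + (q.eval b)^2 + (h * (derivative q).eval a)^2
          + (h * (derivative q).eval b)^2) := by ring
  _ ≤ h * (K * (h⁻¹ * ∫ s in a..b, (q.eval s)^2)) := hmul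
  _ = K * ∫ s in a..b, (q.eval s)^2 := by
      field_simp


lemma step2 (h A A' β K E1 : ℝ) (hh : 0 < h) (hβ : 0 ≤ β)
    (h1 : h*A^2 ≤ K*E1) (h2 : h^3*A'^2 ≤ K*E1) :
    h*(A + β*h*A')^2 ≤ 2*(1+β^2)*(K*E1) := by
  have e1 : h*(A + β*h*A')^2 ≤ 2*(h*A^2) + 2*β^2*(h^3*A'^2) := by
    nlinarith [mul_nonneg hh.le (sq_nonneg (A - β*h*A'))]
  have e2 : 2*β^2*(h^3*A'^2) ≤ 2*β^2*(K*E1) := by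
    apply mul_le_mul_of_nonneg_left h2 (by positivity)
  nlinarith

lemma step3 (d hj hj1 A B A' B' β K Ej Ej1 : ℝ)
    (hd : 0 < d) (hdj : d ≤ hj) (hdj1 : d ≤ hj1) (hβ : 0 ≤ β)
    (hjpos : 0 < hj) (hj1pos : 0 < hj1)
    (h1 : hj*A^2 ≤ K*Ej) (h2 : hj1*B^2 ≤ K*Ej1)
    (h3 : hj^3*A'^2 ≤ K*Ej) (h4 : hj1^3*B'^2 ≤ K*Ej1) :
    d*((A+B)/2 + β*d*(B'-A'))^2 ≤ 4*(1+β^2)*(K*Ej + K*Ej1) := by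
  have hd3j : d^3 ≤ hj^3 := pow_le_pow_left₀ hd.le hdj 3
  have hd3j1 : d^3 ≤ hj1^3 := pow_le_pow_left₀ hd.le hdj1 3
  have e1 : d*((A+B)/2 + β*d*(B'-A'))^2
      ≤ 2*(d*((A+B)/2)^2) + 2*β^2*(d^3*(B'-A')^2) := by
    nlinarith [mul_nonneg hd.le (sq_nonneg ((A+B)/2 - β*d*(B'-A')))]
  have e2 : 2*(d*((A+B)/2)^2) ≤ d*A^2 + d*B^2 := by
    nlinarith [mul_nonneg hd.le (sq_nonneg (A - B))]
  have e3 : d*A^2 ≤ hj*A^2 := by nlinarith [sq_nonneg A]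
  have e4 : d*B^2 ≤ hj1*B^2 := by nlinarith [sq_nonneg B]
  have e5 : d^3*(B'-A')^2 ≤ 2*(hj^3*A'^2) + 2*(hj1^3*B'^2) := by
    nlinarith [mul_nonneg (pow_nonneg hd.le 3) (sq_nonneg (A'+B')), sq_nonneg A', sq_nonneg B']
  have e6 : 2*β^2*(d^3*(B'-A')^2) ≤ 2*β^2*(2*(K*Ej) + 2*(K*Ej1)) := by
    apply mul_le_mul_of_nonneg_left _ (by positivity)
    linarith [e5, h3, h4]
  have hEj : 0 ≤ K*Ej := le_trans (by positivity) h1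
  have hEj1 : 0 ≤ K*Ej1 := le_trans (by positivity) h2
  have hb2 : 0 ≤ β^2 := sq_nonneg β
  linarith [e1, e2, e3, e4, e6, hEj, hEj1]


/-- Trace-type inverse inequality for piecewise polynomials of degree at most `k`:
the weighted nodal sums of averaged first derivatives plus `β₁`-scaled jumps of
second derivatives are controlled by the broken `L²` norm of the derivative. -/
theorem stmt_7 (k : ℕ) (hk : 1 ≤ k) (β₁ : ℝ) (hβ₁ : 0 ≤ β₁) :
    ∃ C > 0, ∀ N : ℕ, 1 ≤ N → ∀ x : ℕ → ℝ, x 0 = 0 → x N = 1 →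
      (∀ j, 1 ≤ j → j ≤ N → x (j - 1) < x j) →
      ∀ p : ℕ → Polynomial ℝ, (∀ j, 1 ≤ j → j ≤ N → (p j).natDegree ≤ k) →
      ∀ Δh : ℕ → ℝ,
        Δh 0 = x 1 - x 0 →
        Δh N = x N - x (N - 1) →
        (∀ j, 1 ≤ j → j ≤ N - 1 → Δh j = min (x j - x (j - 1)) (x (j + 1) - x j)) →
      ∀ avg : ℕ → ℝ,
        avg 0 = (derivative (p 1)).eval (x 0) →
        avg N = (derivative (p N)).eval (x N) →
        (∀ j, 1 ≤ j → j ≤ N - 1 →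
          avg j = ((derivative (p j)).eval (x j) + (derivative (p (j + 1))).eval (x j)) / 2) →
      ∀ jmp : ℕ → ℝ,
        jmp 0 = (derivative (derivative (p 1))).eval (x 0) →
        jmp N = -((derivative (derivative (p N))).eval (x N)) →
        (∀ j, 1 ≤ j → j ≤ N - 1 →
          jmp j = (derivative (derivative (p (j + 1)))).eval (x j)
            - (derivative (derivative (p j))).eval (x j)) →
      ∑ j ∈ Finset.range (N + 1), Δh j * (avg j + β₁ * Δh j * jmp j) ^ 2 ≤
        C * (1 + β₁ ^ 2) *
          ∑ j ∈ Finset.Icc 1 N, ∫ t in (x (j - 1))..(x j), ((derivative (p j)).eval t) ^ 2 := by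
  obtain ⟨K, hK, hT⟩ := traceScaled k
  refine ⟨16 * K, by positivity, ?_⟩
  intro N hN x hx0 hxN hx p hp Δh hΔ0 hΔN hΔi avg ha0 haN hai jmp hj0 hjN hji
  set E : ℕ → ℝ := fun j => ∫ t in (x (j-1))..(x j), ((derivative (p j)).eval t)^2 with hE
  have hEnn : ∀ i, 1 ≤ i → i ≤ N → 0 ≤ E i := fun i h1 h2 =>
    intervalIntegral.integral_nonneg (le_of_lt (hx i h1 h2)) (fun t _ => sq_nonneg _)
  -- trace bounds per interval
  have tb : ∀ i, 1 ≤ i → i ≤ N →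
      (x i - x (i-1)) * ((derivative (p i)).eval (x (i-1)))^2 ≤ K * E i ∧
      (x i - x (i-1)) * ((derivative (p i)).eval (x i))^2 ≤ K * E i ∧
      (x i - x (i-1))^3 * ((derivative (derivative (p i))).eval (x (i-1)))^2 ≤ K * E i ∧
      (x i - x (i-1))^3 * ((derivative (derivative (p i))).eval (x i))^2 ≤ K * E i := by
    intro i h1 h2
    have hab := hx i h1 h2
    have hdeg : (derivative (p i)).natDegree ≤ k :=
      le_trans (natDegree_derivative_le _) (le_trans (Nat.sub_le _ 1) (hp i h1 h2))
    have H : (x i - x (i-1)) * (((derivative (p i)).eval (x (i-1)))^2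
        + ((derivative (p i)).eval (x i))^2)
        + (x i - x (i-1))^3 * (((derivative (derivative (p i))).eval (x (i-1)))^2
        + ((derivative (derivative (p i))).eval (x i))^2) ≤ K * E i :=
      hT (x (i-1)) (x i) hab (derivative (p i)) hdeg
    have hh : (0:ℝ) < x i - x (i-1) := by linarith
    have n1 : 0 ≤ (x i - x (i-1)) * ((derivative (p i)).eval (x (i-1)))^2 := by positivity
    have n2 : 0 ≤ (x i - x (i-1)) * ((derivative (p i)).eval (x i))^2 := by positivity
    have n3 : 0 ≤ (x i - x (i-1))^3 * ((derivative (derivative (p i))).eval (x (i-1)))^2 := by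
      positivity
    have n4 : 0 ≤ (x i - x (i-1))^3 * ((derivative (derivative (p i))).eval (x i))^2 := by
      positivity
    exact ⟨by linarith, by linarith, by linarith, by linarith⟩
  -- per-node bound
  have node : ∀ j ∈ Finset.range (N+1),
      Δh j * (avg j + β₁ * Δh j * jmp j)^2
        ≤ 4*K*(1+β₁^2) * (E (max j 1) + E (min (j+1) N)) := by
    intro j hj
    rw [Finset.mem_range] at hj
    rcases eq_or_ne j 0 with rfl | hj0'
    · -- j = 0
      obtain ⟨t1, t2, t3, t4⟩ := tb 1 le_rfl hN
      rw [show (1:ℕ) - 1 = 0 from rfl] at t1 t3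
      rw [hΔ0, ha0, hj0]
      have := step2 (x 1 - x 0) ((derivative (p 1)).eval (x 0))
        ((derivative (derivative (p 1))).eval (x 0)) β₁ K (E 1)
        (by have := hx 1 le_rfl hN; simpa using this) hβ₁ t1 t3
      have hmax : max 0 1 = 1 := rfl
      have hmin : min (0+1) N = 1 := by omega
      rw [hmax, hmin]
      have hE1 : 0 ≤ K * E 1 := le_trans
        (mul_nonneg (by have := hx 1 le_rfl hN; linarith) (sq_nonneg _)) t1
      linarith [this, mul_nonneg (sq_nonneg β₁) hE1]
    · rcases eq_or_ne j N with rfl | hjN'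
      · -- j = N (N has been substituted by j)
        obtain ⟨t1, t2, t3, t4⟩ := tb j (by omega) le_rfl
        rw [hΔN, haN, hjN]
        have hstep := step2 (x j - x (j-1)) ((derivative (p j)).eval (x j))
          (-((derivative (derivative (p j))).eval (x j))) β₁ K (E j)
          (by have := hx j (by omega) le_rfl; linarith) hβ₁ t2 (by rw [neg_sq]; exact t4)
        have hmax : max j 1 = j := by omega
        have hmin : min (j+1) j = j := by omega
        rw [hmax, hmin]
        have hEN : 0 ≤ K * E j := le_trans
          (mul_nonneg (by have := hx j (by omega) le_rfl; linarith) (sq_nonneg _)) t2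
        linarith [hstep, mul_nonneg (sq_nonneg β₁) hEN]
      · -- interior
        have h1 : 1 ≤ j := by omega
        have h2 : j ≤ N - 1 := by omega
        have hjN2 : j ≤ N := by omega
        have hj1N : j + 1 ≤ N := by omega
        obtain ⟨t1, t2, t3, t4⟩ := tb j h1 hjN2
        obtain ⟨s1, s2, s3, s4⟩ := tb (j+1) (by omega) hj1N
        rw [show j + 1 - 1 = j from rfl] at s1 s3
        rw [hΔi j h1 h2, hai j h1 h2, hji j h1 h2]
        have hmax : max j 1 = j := by omega
        have hmin : min (j+1) N = j+1 := by omega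
        rw [hmax, hmin]
        have hhj : (0:ℝ) < x j - x (j-1) := by have := hx j h1 hjN2; linarith
        have hhj1 : (0:ℝ) < x (j+1) - x j := by
          have := hx (j+1) (by omega) hj1N
          rw [show j + 1 - 1 = j from rfl] at this; linarith
        have hd : (0:ℝ) < min (x j - x (j-1)) (x (j+1) - x j) := lt_min hhj hhj1
        have hstep := step3 (min (x j - x (j-1)) (x (j+1) - x j))
          (x j - x (j-1)) (x (j+1) - x j)
          ((derivative (p j)).eval (x j)) ((derivative (p (j+1))).eval (x j))
          ((derivative (derivative (p j))).eval (x j))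
          ((derivative (derivative (p (j+1)))).eval (x j))
          β₁ K (E j) (E (j+1))
          hd (min_le_left _ _) (min_le_right _ _) hβ₁ hhj hhj1 t2 s1 t4 s3
        linarith [hstep]
  -- sum up
  have sum1 := Finset.sum_le_sum node
  have hS : ∀ i ∈ Finset.Icc 1 N, 0 ≤ E i := by
    intro i hi; rw [Finset.mem_Icc] at hi; exact hEnn i hi.1 hi.2
  set S : ℝ := ∑ i ∈ Finset.Icc 1 N, E i with hSdef
  have hSnn : 0 ≤ S := Finset.sum_nonneg hS
  have hE1S : E 1 ≤ S := Finset.single_le_sum hS (Finset.mem_Icc.mpr ⟨le_rfl, hN⟩)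
  have hENS : E N ≤ S := Finset.single_le_sum hS (Finset.mem_Icc.mpr ⟨hN, le_rfl⟩)
  have hIcc : S = ∑ i ∈ Finset.range N, E (1 + i) := by
    rw [hSdef, ← Finset.Ico_add_one_right_eq_Icc, Finset.sum_Ico_eq_sum_range]
    norm_num
  have SA : ∑ j ∈ Finset.range (N+1), E (max j 1) ≤ 2 * S := by
    rw [Finset.sum_range_succ']
    have : ∀ i ∈ Finset.range N, E (max (i+1) 1) = E (1 + i) := by
      intro i _; congr 1; omega
    rw [Finset.sum_congr rfl this, ← hIcc]
    simp only [Nat.max_self, max_eq_right (Nat.zero_le 1)]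
    linarith
  have SB : ∑ j ∈ Finset.range (N+1), E (min (j+1) N) ≤ 2 * S := by
    rw [Finset.sum_range_succ]
    have : ∀ i ∈ Finset.range N, E (min (i+1) N) = E (i+1) := by
      intro i hi; rw [Finset.mem_range] at hi; congr 1; omega
    rw [Finset.sum_congr rfl this]
    have : ∑ i ∈ Finset.range N, E (i+1) = S := by
      rw [hIcc]; apply Finset.sum_congr rfl; intro i _; congr 1; omega
    rw [this, show min (N+1) N = N by omega]
    linarith
  have SG : ∑ j ∈ Finset.range (N+1), (E (max j 1) + E (min (j+1) N)) ≤ 4 * S := by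
    rw [Finset.sum_add_distrib]; linarith
  calc ∑ j ∈ Finset.range (N + 1), Δh j * (avg j + β₁ * Δh j * jmp j) ^ 2
      ≤ ∑ j ∈ Finset.range (N+1), 4*K*(1+β₁^2) * (E (max j 1) + E (min (j+1) N)) := sum1
  _ = 4*K*(1+β₁^2) * ∑ j ∈ Finset.range (N+1), (E (max j 1) + E (min (j+1) N)) := by
      rw [Finset.mul_sum]
  _ ≤ 4*K*(1+β₁^2) * (4 * S) := by
      apply mul_le_mul_of_nonneg_left SG (by positivity)
  _ = 16 * K * (1 + β₁^2) * S := by ring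
end

section
/- Let N ≥ 1, let 0 = x₀ < x₁ < ... < x_N = 1 be a partition with h_j = x_j - x_{j-1} and Δh_j = min(h_j, h_{j+1}) for 1 ≤ j ≤ N-1, and let w₁, ..., w_N be functions with w_j twice continuously differentiable on [x_{j-1}, x_j]. For 1 ≤ j ≤ N-1 set [w]_j = w_{j+1}(x_j) - w_j(x_j), {w'}_j = (w_j'(x_j) + w_{j+1}'(x_j))/2, and [w'']_j = w_{j+1}''(x_j) - w_j''(x_j). Let μ₁ ∈ (0,1), μ₂ ∈ (0,1], β₁ ≥ 0, M ≥ 0 and real numbers β_{0,j} (1 ≤ j ≤ N-1) be given, and assume (i) ∑_{j=1}^{N-1} Δh_j ({w'}_j + (β₁/2) Δh_j [w'']_j)² ≤ M ∑_{j=1}^{N} ∫_{x_{j-1}}^{x_j} (w_j'(x))² dx, and (ii) β_{0,j} ≥ μ₂ + M/μ₁ for all 1 ≤ j ≤ N-1. Define the numerical flux ŵ_j = (β_{0,j}/Δh_j)[w]_j + {w'}_j + β₁ Δh_j [w'']_j. Then μ₁ ∑_{j=1}^{N} ∫_{x_{j-1}}^{x_j} (w_j'(x))² dx + ∑_{j=1}^{N-1}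 ( ŵ_j [w]_j + [w]_j {w'}_j ) ≥ μ₂ ∑_{j=1}^{N-1} [w]_j² / Δh_j. -/
open Set

/-- Admissibility of the DDG numerical flux: under the bound (i) on the averaged
derivative/jump terms and the lower bound (ii) on the penalty coefficients
`β₀ⱼ ≥ μ₂ + M/μ₁`, the DDG stability inequality holds. -/
theorem stmt_8 (N : ℕ) (hN : 1 ≤ N) (x : ℕ → ℝ) (hx0 : x 0 = 0) (hxN : x N = 1)
    (hmono : ∀ j, 1 ≤ j → j ≤ N → x (j - 1) < x j)
    (w w' w'' : ℕ → ℝ → ℝ)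
    (hw' : ∀ j, 1 ≤ j → j ≤ N → ∀ t ∈ Icc (x (j - 1)) (x j),
      HasDerivWithinAt (w j) (w' j t) (Icc (x (j - 1)) (x j)) t)
    (hw'' : ∀ j, 1 ≤ j → j ≤ N → ∀ t ∈ Icc (x (j - 1)) (x j),
      HasDerivWithinAt (w' j) (w'' j t) (Icc (x (j - 1)) (x j)) t)
    (hw''c : ∀ j, 1 ≤ j → j ≤ N → ContinuousOn (w'' j) (Icc (x (j - 1)) (x j)))
    (Δh : ℕ → ℝ)
    (hΔh : ∀ j, 1 ≤ j → j ≤ N - 1 → Δh j = min (x j - x (j - 1)) (x (j + 1) - x j))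
    (μ₁ μ₂ β₁ M : ℝ)
    (hμ₁ : μ₁ ∈ Ioo (0:ℝ) 1) (hμ₂ : μ₂ ∈ Ioc (0:ℝ) 1) (hβ₁ : 0 ≤ β₁) (hM : 0 ≤ M)
    (β₀ : ℕ → ℝ)
    (jump avg jmp flux : ℕ → ℝ)
    (hjump : ∀ j, 1 ≤ j → j ≤ N - 1 → jump j = w (j + 1) (x j) - w j (x j))
    (havg : ∀ j, 1 ≤ j → j ≤ N - 1 → avg j = (w' j (x j) + w' (j + 1) (x j)) / 2)
    (hjmp : ∀ j, 1 ≤ j → j ≤ N - 1 → jmp j = w'' (j + 1) (x j) - w'' j (x j))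
    (hflux : ∀ j, 1 ≤ j → j ≤ N - 1 →
      flux j = β₀ j / Δh j * jump j + avg j + β₁ * Δh j * jmp j)
    (hi : ∑ j ∈ Finset.Icc 1 (N - 1), Δh j * (avg j + β₁ / 2 * Δh j * jmp j) ^ 2 ≤
      M * ∑ j ∈ Finset.Icc 1 N, ∫ t in (x (j - 1))..(x j), (w' j t) ^ 2)
    (hii : ∀ j, 1 ≤ j → j ≤ N - 1 → μ₂ + M / μ₁ ≤ β₀ j) :
    μ₁ * (∑ j ∈ Finset.Icc 1 N, ∫ t in (x (j - 1))..(x j), (w' j t) ^ 2) +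
      ∑ j ∈ Finset.Icc 1 (N - 1), (flux j * jump j + jump j * avg j) ≥
    μ₂ * ∑ j ∈ Finset.Icc 1 (N - 1), (jump j) ^ 2 / Δh j := by
  obtain ⟨hμ₁0, hμ₁1⟩ := hμ₁
  obtain ⟨hμ₂0, hμ₂1⟩ := hμ₂
  have hΔpos : ∀ j, 1 ≤ j → j ≤ N - 1 → 0 < Δh j := by
    intro j hj1 hj2
    rw [hΔh j hj1 hj2]
    have h1 := hmono j hj1 (le_trans hj2 (Nat.sub_le N 1))
    have h2 := hmono (j + 1) (by omega) (by omega)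
    simp only [Nat.add_sub_cancel] at h2
    exact lt_min (by linarith) (by linarith)
  set D := ∑ j ∈ Finset.Icc 1 N, ∫ t in (x (j - 1))..(x j), (w' j t) ^ 2 with hD
  have hDnn : 0 ≤ D := by
    apply Finset.sum_nonneg
    intro j hj
    simp only [Finset.mem_Icc] at hj
    exact intervalIntegral.integral_nonneg (le_of_lt (hmono j hj.1 hj.2))
      (fun t _ => sq_nonneg _)
  have hterm : ∀ j, 1 ≤ j → j ≤ N - 1 →
      flux j * jump j + jump j * avg j =
        β₀ j / Δh j * (jump j) ^ 2 +
          2 * jump j * (avg j + β₁ / 2 * Δh j * jmp j) := by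
    intro j hj1 hj2
    rw [hflux j hj1 hj2]; ring
  rw [ge_iff_le, Finset.mul_sum]
  rcases eq_or_lt_of_le hM with hM0 | hMpos
  · -- M = 0
    have hAnn : ∀ j ∈ Finset.Icc 1 (N - 1),
        0 ≤ Δh j * (avg j + β₁ / 2 * Δh j * jmp j) ^ 2 := by
      intro j hj
      simp only [Finset.mem_Icc] at hj
      exact mul_nonneg (hΔpos j hj.1 hj.2).le (sq_nonneg _)
    have hsum0 : ∑ j ∈ Finset.Icc 1 (N - 1),
        Δh j * (avg j + β₁ / 2 * Δh j * jmp j) ^ 2 = 0 := by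
      have h1 := Finset.sum_nonneg hAnn
      nlinarith [hi]
    have hA0 : ∀ j ∈ Finset.Icc 1 (N - 1), avg j + β₁ / 2 * Δh j * jmp j = 0 := by
      intro j hj
      have h0 := (Finset.sum_eq_zero_iff_of_nonneg hAnn).mp hsum0 j hj
      simp only [Finset.mem_Icc] at hj
      have hΔ := hΔpos j hj.1 hj.2
      have hsq : (avg j + β₁ / 2 * Δh j * jmp j) ^ 2 = 0 := by
        rcases mul_eq_zero.mp h0 with h | h
        · linarith
        · exact h
      exact pow_eq_zero_iff (by norm_num) |>.mp hsq
    have hle : ∀ j ∈ Finset.Icc 1 (N - 1),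
        μ₂ * ((jump j) ^ 2 / Δh j) ≤ flux j * jump j + jump j * avg j := by
      intro j hj
      have hj' := hj
      simp only [Finset.mem_Icc] at hj'
      rw [hterm j hj'.1 hj'.2, hA0 j hj]
      have hΔ := hΔpos j hj'.1 hj'.2
      have hβ : μ₂ ≤ β₀ j := by
        have h := hii j hj'.1 hj'.2
        rw [← hM0] at h
        simpa using h
      calc μ₂ * ((jump j) ^ 2 / Δh j) = μ₂ * (jump j) ^ 2 / Δh j := by ring
        _ ≤ β₀ j * (jump j) ^ 2 / Δh j := by gcongr
        _ = β₀ j / Δh j * (jump j) ^ 2 + 2 * jump j * 0 := by ring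
    have hsumle := Finset.sum_le_sum hle
    have hμD : 0 ≤ μ₁ * D := mul_nonneg hμ₁0.le hDnn
    linarith
  · -- M > 0
    have hle : ∀ j ∈ Finset.Icc 1 (N - 1),
        μ₂ * ((jump j) ^ 2 / Δh j) ≤ (flux j * jump j + jump j * avg j) +
          μ₁ / M * (Δh j * (avg j + β₁ / 2 * Δh j * jmp j) ^ 2) := by
      intro j hj
      simp only [Finset.mem_Icc] at hj
      rw [hterm j hj.1 hj.2]
      have hΔ := hΔpos j hj.1 hj.2
      have hβ := hii j hj.1 hj.2
      set J := jump j with hJ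
      set A := avg j + β₁ / 2 * Δh j * jmp j with hA
      have key : 0 ≤ M / μ₁ * J ^ 2 + 2 * J * A * Δh j +
          μ₁ / M * (Δh j ^ 2 * A ^ 2) := by
        have ha : 0 < M / μ₁ := div_pos hMpos hμ₁0
        have expand : M / μ₁ * (M / μ₁ * J ^ 2 + 2 * J * A * Δh j +
            μ₁ / M * (Δh j ^ 2 * A ^ 2)) = (M / μ₁ * J + Δh j * A) ^ 2 := by
          field_simp
          ring
        have h0 : 0 ≤ M / μ₁ * (M / μ₁ * J ^ 2 + 2 * J * A * Δh j +
            μ₁ / M * (Δh j ^ 2 * A ^ 2)) := expand ▸ sq_nonneg _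
        exact nonneg_of_mul_nonneg_right h0 ha
      have goal' : μ₂ * J ^ 2 ≤ β₀ j * J ^ 2 + 2 * J * A * Δh j +
          μ₁ / M * (Δh j ^ 2 * A ^ 2) := by
        have hb : (μ₂ + M / μ₁) * J ^ 2 ≤ β₀ j * J ^ 2 := by
          nlinarith [sq_nonneg J]
        nlinarith [key]
      calc μ₂ * (J ^ 2 / Δh j) = μ₂ * J ^ 2 / Δh j := by ring
        _ ≤ (β₀ j * J ^ 2 + 2 * J * A * Δh j + μ₁ / M * (Δh j ^ 2 * A ^ 2)) /
              Δh j := by gcongr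
        _ = β₀ j / Δh j * J ^ 2 + 2 * J * A + μ₁ / M * (Δh j * A ^ 2) := by
            field_simp
    have hsumle := Finset.sum_le_sum hle
    rw [Finset.sum_add_distrib] at hsumle
    have hfold : ∑ j ∈ Finset.Icc 1 (N - 1),
        μ₁ / M * (Δh j * (avg j + β₁ / 2 * Δh j * jmp j) ^ 2) =
        μ₁ / M * ∑ j ∈ Finset.Icc 1 (N - 1),
          Δh j * (avg j + β₁ / 2 * Δh j * jmp j) ^ 2 := by
      rw [Finset.mul_sum]
    have hbound : μ₁ / M * ∑ j ∈ Finset.Icc 1 (N - 1),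
        Δh j * (avg j + β₁ / 2 * Δh j * jmp j) ^ 2 ≤ μ₁ / M * (M * D) := by
      apply mul_le_mul_of_nonneg_left hi
      positivity
    have heq : μ₁ / M * (M * D) = μ₁ * D := by
      field_simp
    linarith
end

section
/- Let a : ℝ → ℝ be continuously differentiable and b : ℝ → ℝ continuous on [0,1], with a(x) ≥ 0 and b(x) - a'(x)/2 ≥ γ for all x ∈ [0,1], where γ > 0, and let θ be a real number with 1/2 ≤ θ ≤ 1. Let N ≥ 1, let 0 = x₀ < x₁ < ... < x_N = 1 be a partition, and let v₁, ..., v_N be functions with v_j continuously differentiable on [x_{j-1}, x_j]. For 1 ≤ j ≤ N-1 set [v]_j = v_{j+1}(x_j) - v_j(x_j) and ṽ_j = θ v_j(x_j) + (1-θ) v_{j+1}(x_j); set [v]₀ = v₁(x₀), ṽ₀ = 0, [v]_N = -v_N(x_N), ṽ_N = v_N(x_N). Then -∑_{j=1}^{N} ∫_{x_{j-1}}^{x_j} a(x) v_j(x) v_j'(x) dx - ∑_{j=1}^{N} ∫_{x_{j-1}}^{x_j} a'(x) v_j(x)² dx - ∑_{j=0}^{N} a(x_j) ṽ_j [v]_j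 + ∑_{j=1}^{N} ∫_{x_{j-1}}^{x_j} b(x) v_j(x)² dx ≥ γ ∑_{j=1}^{N} ∫_{x_{j-1}}^{x_j} v_j(x)² dx + (θ - 1/2) ∑_{j=1}^{N-1} a(x_j) [v]_j² + (1/2) a(x₀) v₁(x₀)² + (1/2) a(x_N) v_N(x_N)². -/
open Set intervalIntegral

lemma interval_step (γ : ℝ) (a a' b : ℝ → ℝ) (c d : ℝ) (hcd : c ≤ d)
    (hsub : Icc c d ⊆ Icc 0 1)
    (ha : ∀ t ∈ Icc (0:ℝ) 1, HasDerivWithinAt a (a' t) (Icc 0 1) t)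
    (ha'c : ContinuousOn a' (Icc 0 1)) (hbc : ContinuousOn b (Icc 0 1))
    (hba : ∀ t ∈ Icc (0:ℝ) 1, γ ≤ b t - a' t / 2)
    (f f' : ℝ → ℝ)
    (hf : ∀ t ∈ Icc c d, HasDerivWithinAt f (f' t) (Icc c d) t)
    (hf'c : ContinuousOn f' (Icc c d)) :
    γ * (∫ t in c..d, (f t) ^ 2)
      + (1 / 2 * a c * (f c) ^ 2 - 1 / 2 * a d * (f d) ^ 2)
    ≤ -(∫ t in c..d, a t * f t * f' t) - (∫ t in c..d, a' t * (f t) ^ 2)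
      + ∫ t in c..d, b t * (f t) ^ 2 := by
  have hac : ContinuousOn a (Icc (0:ℝ) 1) := fun t ht => (ha t ht).continuousWithinAt
  have hfc : ContinuousOn f (Icc c d) := fun t ht => (hf t ht).continuousWithinAt
  have haI : ContinuousOn a (Icc c d) := hac.mono hsub
  have ha'I : ContinuousOn a' (Icc c d) := ha'c.mono hsub
  have hbI : ContinuousOn b (Icc c d) := hbc.mono hsub
  have int1 : IntervalIntegrable (fun t => a t * f t * f' t) MeasureTheory.volume c d :=
    ((haI.mul hfc).mul hf'c).intervalIntegrable_of_Icc hcd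
  have int2 : IntervalIntegrable (fun t => a' t * (f t) ^ 2) MeasureTheory.volume c d :=
    (ha'I.mul (hfc.pow 2)).intervalIntegrable_of_Icc hcd
  have int3 : IntervalIntegrable (fun t => b t * (f t) ^ 2) MeasureTheory.volume c d :=
    (hbI.mul (hfc.pow 2)).intervalIntegrable_of_Icc hcd
  have int4 : IntervalIntegrable (fun t => (f t) ^ 2) MeasureTheory.volume c d :=
    (hfc.pow 2).intervalIntegrable_of_Icc hcd
  have int6 : IntervalIntegrable (fun t => a' t * (f t) ^ 2 / 2) MeasureTheory.volume c d :=
    ((ha'I.mul (hfc.pow 2)).div_const 2).intervalIntegrable_of_Icc hcd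
  -- FTC
  have hftc : ∫ t in c..d, (a' t * (f t) ^ 2 / 2 + a t * f t * f' t)
      = a d * (f d) ^ 2 / 2 - a c * (f c) ^ 2 / 2 := by
    have hcont : ContinuousOn (fun t => a t * (f t) ^ 2 / 2) (Icc c d) :=
      (haI.mul (hfc.pow 2)).div_const 2
    have hderiv : ∀ t ∈ Ioo c d, HasDerivAt (fun t => a t * (f t) ^ 2 / 2)
        (a' t * (f t) ^ 2 / 2 + a t * f t * f' t) t := by
      intro t ht
      have htm : Icc c d ∈ nhds t := mem_nhds_iff.2 ⟨Ioo c d, Ioo_subset_Icc_self, isOpen_Ioo, ht⟩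
      have htm' : Icc (0:ℝ) 1 ∈ nhds t := Filter.mem_of_superset htm hsub
      have hA : HasDerivAt a (a' t) t :=
        (ha t (hsub (Ioo_subset_Icc_self ht))).hasDerivAt htm'
      have hF : HasDerivAt f (f' t) t :=
        (hf t (Ioo_subset_Icc_self ht)).hasDerivAt htm
      have := ((hA.mul (hF.pow 2)).div_const 2)
      convert this using 1
      · rfl
      · rfl
      · rfl
      · simp only [Pi.pow_apply, Nat.add_one_sub_one, pow_one]
        push_cast
        ring
    have hint : IntervalIntegrable (fun t => a' t * (f t) ^ 2 / 2 + a t * f t * f' t)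
        MeasureTheory.volume c d := int6.add int1
    exact integral_eq_sub_of_hasDerivAt_of_le hcd hcont hderiv hint
  have hsplit : (∫ t in c..d, a' t * (f t) ^ 2 / 2) + (∫ t in c..d, a t * f t * f' t)
      = a d * (f d) ^ 2 / 2 - a c * (f c) ^ 2 / 2 := by
    rw [← integral_add int6 int1]; exact hftc
  have hdiv : (∫ t in c..d, a' t * (f t) ^ 2 / 2) = (∫ t in c..d, a' t * (f t) ^ 2) / 2 := by
    simpa using integral_div (2:ℝ) (fun t => a' t * (f t) ^ 2) (a := c) (b := d)
  have hpos : 0 ≤ ∫ t in c..d, (b t - a' t / 2 - γ) * (f t) ^ 2 := by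
    apply integral_nonneg hcd
    intro t ht
    have := hba t (hsub ht)
    have h2 := sq_nonneg (f t)
    nlinarith
  have hexp : (∫ t in c..d, (b t - a' t / 2 - γ) * (f t) ^ 2)
      = (∫ t in c..d, b t * (f t) ^ 2) - (∫ t in c..d, a' t * (f t) ^ 2 / 2)
        - γ * ∫ t in c..d, (f t) ^ 2 := by
    rw [← integral_const_mul, ← integral_sub int3 int6,
        ← integral_sub (int3.sub int6) (int4.const_mul γ)]
    congr 1; ext t; ring
  linarith


/-- Coercivity of the convection–reaction part `B₂(v,v) + B₃(v,v)` of the DDG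
bilinear form with upwind-biased flux weight `θ ∈ [1/2, 1]`. -/
theorem stmt_9 (γ : ℝ) (hγ : 0 < γ) (θ : ℝ) (hθ1 : 1 / 2 ≤ θ) (hθ2 : θ ≤ 1)
    (a a' b : ℝ → ℝ)
    (ha : ∀ t ∈ Icc (0:ℝ) 1, HasDerivWithinAt a (a' t) (Icc 0 1) t)
    (ha'c : ContinuousOn a' (Icc 0 1)) (hbc : ContinuousOn b (Icc 0 1))
    (ha0 : ∀ t ∈ Icc (0:ℝ) 1, 0 ≤ a t)
    (hba : ∀ t ∈ Icc (0:ℝ) 1, γ ≤ b t - a' t / 2)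
    (N : ℕ) (hN : 1 ≤ N) (x : ℕ → ℝ) (hx0 : x 0 = 0) (hxN : x N = 1)
    (hmono : ∀ j, 1 ≤ j → j ≤ N → x (j - 1) < x j)
    (v v' : ℕ → ℝ → ℝ)
    (hv' : ∀ j, 1 ≤ j → j ≤ N → ∀ t ∈ Icc (x (j - 1)) (x j),
      HasDerivWithinAt (v j) (v' j t) (Icc (x (j - 1)) (x j)) t)
    (hv'c : ∀ j, 1 ≤ j → j ≤ N → ContinuousOn (v' j) (Icc (x (j - 1)) (x j)))
    (jump tld : ℕ → ℝ)
    (hjump : ∀ j, 1 ≤ j → j ≤ N - 1 → jump j = v (j + 1) (x j) - v j (x j))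
    (htld : ∀ j, 1 ≤ j → j ≤ N - 1 → tld j = θ * v j (x j) + (1 - θ) * v (j + 1) (x j))
    (hjump0 : jump 0 = v 1 (x 0)) (htld0 : tld 0 = 0)
    (hjumpN : jump N = -(v N (x N))) (htldN : tld N = v N (x N)) :
    -(∑ j ∈ Finset.Icc 1 N, ∫ t in (x (j - 1))..(x j), a t * v j t * v' j t)
      - (∑ j ∈ Finset.Icc 1 N, ∫ t in (x (j - 1))..(x j), a' t * (v j t) ^ 2)
      - (∑ j ∈ Finset.range (N + 1), a (x j) * tld j * jump j)
      + (∑ j ∈ Finset.Icc 1 N, ∫ t in (x (j - 1))..(x j), b t * (v j t) ^ 2)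
    ≥ γ * (∑ j ∈ Finset.Icc 1 N, ∫ t in (x (j - 1))..(x j), (v j t) ^ 2)
      + (θ - 1 / 2) * (∑ j ∈ Finset.Icc 1 (N - 1), a (x j) * (jump j) ^ 2)
      + 1 / 2 * a (x 0) * (v 1 (x 0)) ^ 2
      + 1 / 2 * a (x N) * (v N (x N)) ^ 2 := by
  -- monotonicity of the partition
  have hm : ∀ i j : ℕ, i ≤ j → j ≤ N → x i ≤ x j := by
    intro i j hij hjN
    induction j with
    | zero => simp [Nat.le_zero.mp hij]
    | succ k ih =>
      rcases Nat.eq_or_lt_of_le hij with rfl | h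
      · exact le_refl _
      · have h1 : x i ≤ x k := ih (Nat.lt_succ_iff.mp h) (le_trans (Nat.le_succ k) hjN)
        have h2 : x k < x (k + 1) := by
          have := hmono (k + 1) (by omega) hjN
          simpa using this
        linarith
  have hsub : ∀ j, 1 ≤ j → j ≤ N → Icc (x (j - 1)) (x j) ⊆ Icc (0:ℝ) 1 := by
    intro j hj1 hjN
    apply Icc_subset_Icc
    · rw [← hx0]; exact hm 0 (j - 1) (Nat.zero_le _) (by omega)
    · rw [← hxN]; exact hm j N (by omega) le_rfl
  have hcd : ∀ j, 1 ≤ j → j ≤ N → x (j - 1) ≤ x j := fun j h1 h2 => (hmono j h1 h2).le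
  -- per-interval inequality
  have key : ∀ j ∈ Finset.Icc 1 N,
      γ * (∫ t in (x (j-1))..(x j), (v j t) ^ 2)
        + (1 / 2 * a (x (j-1)) * (v j (x (j-1))) ^ 2 - 1 / 2 * a (x j) * (v j (x j)) ^ 2)
      ≤ -(∫ t in (x (j-1))..(x j), a t * v j t * v' j t)
        - (∫ t in (x (j-1))..(x j), a' t * (v j t) ^ 2)
        + ∫ t in (x (j-1))..(x j), b t * (v j t) ^ 2 := by
    intro j hj
    rw [Finset.mem_Icc] at hj
    exact interval_step γ a a' b (x (j-1)) (x j) (hcd j hj.1 hj.2) (hsub j hj.1 hj.2)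
      ha ha'c hbc hba (v j) (v' j) (hv' j hj.1 hj.2) (hv'c j hj.1 hj.2)
  have hsumineq := Finset.sum_le_sum key
  rw [Finset.sum_add_distrib, ← Finset.mul_sum] at hsumineq
  have hrhs : ∑ j ∈ Finset.Icc 1 N,
      (-(∫ t in (x (j-1))..(x j), a t * v j t * v' j t)
        - (∫ t in (x (j-1))..(x j), a' t * (v j t) ^ 2)
        + ∫ t in (x (j-1))..(x j), b t * (v j t) ^ 2)
      = -(∑ j ∈ Finset.Icc 1 N, ∫ t in (x (j - 1))..(x j), a t * v j t * v' j t)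
        - (∑ j ∈ Finset.Icc 1 N, ∫ t in (x (j - 1))..(x j), a' t * (v j t) ^ 2)
        + (∑ j ∈ Finset.Icc 1 N, ∫ t in (x (j - 1))..(x j), b t * (v j t) ^ 2) := by
    rw [Finset.sum_add_distrib, Finset.sum_sub_distrib, Finset.sum_neg_distrib]
  rw [hrhs] at hsumineq
  -- boundary identity
  obtain ⟨M, rfl⟩ : ∃ M, N = M + 1 := ⟨N - 1, (Nat.succ_pred_eq_of_pos hN).symm⟩
  have hNm : M + 1 - 1 = M := rfl
  have hbd : (∑ j ∈ Finset.Icc 1 (M+1),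
        (1 / 2 * a (x (j-1)) * (v j (x (j-1))) ^ 2 - 1 / 2 * a (x j) * (v j (x j)) ^ 2))
      - (∑ j ∈ Finset.range (M + 2), a (x j) * tld j * jump j)
      = (θ - 1 / 2) * (∑ j ∈ Finset.Icc 1 M, a (x j) * (jump j) ^ 2)
        + 1 / 2 * a (x 0) * (v 1 (x 0)) ^ 2
        + 1 / 2 * a (x (M+1)) * (v (M+1) (x (M+1))) ^ 2 := by
    have e1 : ∀ (f : ℕ → ℝ), ∑ j ∈ Finset.Icc 1 (M+1), f j
        = ∑ i ∈ Finset.range (M+1), f (1 + i) := by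
      intro f
      rw [← Finset.Ico_add_one_right_eq_Icc, Finset.sum_Ico_eq_sum_range]
      simp
    have e2 : ∀ (f : ℕ → ℝ), ∑ j ∈ Finset.Icc 1 M, f j
        = ∑ i ∈ Finset.range M, f (1 + i) := by
      intro f
      rw [← Finset.Ico_add_one_right_eq_Icc, Finset.sum_Ico_eq_sum_range]
      simp
    -- S split
    rw [e1, e2]
    have hS : ∑ i ∈ Finset.range (M+1),
        (1 / 2 * a (x (1+i-1)) * (v (1+i) (x (1+i-1))) ^ 2
          - 1 / 2 * a (x (1+i)) * (v (1+i) (x (1+i))) ^ 2)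
        = (∑ i ∈ Finset.range (M+1), 1 / 2 * a (x i) * (v (i+1) (x i)) ^ 2)
          - ∑ i ∈ Finset.range (M+1), 1 / 2 * a (x (i+1)) * (v (i+1) (x (i+1))) ^ 2 := by
      rw [← Finset.sum_sub_distrib]
      apply Finset.sum_congr rfl
      intro i _
      have : 1 + i - 1 = i := by omega
      rw [this, Nat.add_comm 1 i]
    rw [hS]
    rw [Finset.sum_range_succ' (fun i => 1 / 2 * a (x i) * (v (i+1) (x i)) ^ 2) M]
    rw [Finset.sum_range_succ (fun i => 1 / 2 * a (x (i+1)) * (v (i+1) (x (i+1))) ^ 2) M]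
    rw [Finset.sum_range_succ' (fun j => a (x j) * tld j * jump j) (M+1)]
    rw [Finset.sum_range_succ (fun i => a (x (i+1)) * tld (i+1) * jump (i+1)) M]
    have hterm : ∀ i ∈ Finset.range M,
        1 / 2 * a (x (i+1)) * (v (i+1+1) (x (i+1))) ^ 2
          - 1 / 2 * a (x (i+1)) * (v (i+1) (x (i+1))) ^ 2
          - a (x (i+1)) * tld (i+1) * jump (i+1)
        = (θ - 1 / 2) * (a (x (1+i)) * (jump (1+i)) ^ 2) := by
      intro i hi
      rw [Finset.mem_range] at hi
      have h1 : 1 ≤ i + 1 := by omega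
      have h2 : i + 1 ≤ M + 1 - 1 := by omega
      have hc : 1 + i = i + 1 := by omega
      rw [hc, hjump (i+1) h1 h2, htld (i+1) h1 h2]
      ring
    have hsum3 : ∑ i ∈ Finset.range M,
        (1 / 2 * a (x (i+1)) * (v (i+1+1) (x (i+1))) ^ 2
          - 1 / 2 * a (x (i+1)) * (v (i+1) (x (i+1))) ^ 2
          - a (x (i+1)) * tld (i+1) * jump (i+1))
        = ∑ i ∈ Finset.range M, (θ - 1 / 2) * (a (x (1+i)) * (jump (1+i)) ^ 2) :=
      Finset.sum_congr rfl hterm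
    rw [Finset.sum_sub_distrib, Finset.sum_sub_distrib, ← Finset.mul_sum] at hsum3
    rw [htld0, hjumpN, htldN]
    have hMN : jump (M+1) = -(v (M+1) (x (M+1))) := hjumpN
    nlinarith [hsum3]
  rw [hNm] at *
  linarith [hsumineq, hbd]
end

section
/- Let k ≥ 1 and N ≥ 1 be integers, let θ be a real number with θ > 1/2, let 0 = x₀ < x₁ < ... < x_N = 1 be a partition, and let w : [0,1] → ℝ be continuous. Then there exists a unique family p₁, ..., p_N of real polynomials of degree at most k such that: (i) for every j = 1, ..., N and every polynomial v of degree at most k-1, ∫_{x_{j-1}}^{x_j} p_j(x) v(x) dx = ∫_{x_{j-1}}^{x_j} w(x) v(x) dx; (ii) for every j = 1, ..., N-1, θ p_j(x_j) + (1-θ) p_{j+1}(x_j) = w(x_j); (iii) p_N(x_N) = w(x_N). -/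
open Set Polynomial MeasureTheory intervalIntegral

-- expansion of moments
lemma expand_moments (k : ℕ) (hk : 1 ≤ k) (a b : ℝ) (g : ℝ → ℝ)
    (hg : ContinuousOn g (uIcc a b)) (v : ℝ[X]) (hv : v.natDegree ≤ k - 1) :
    (∫ t in a..b, g t * v.eval t) =
      ∑ i ∈ Finset.range k, v.coeff i * ∫ t in a..b, g t * t ^ i := by
  have hvk : v.natDegree < k := lt_of_le_of_lt hv (by omega)
  have hev : ∀ t : ℝ, v.eval t = ∑ i ∈ Finset.range k, v.coeff i * t ^ i := by
    intro t
    exact v.eval_eq_sum_range' hvk t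
  calc (∫ t in a..b, g t * v.eval t)
      = ∫ t in a..b, ∑ i ∈ Finset.range k, v.coeff i * (g t * t ^ i) := by
        apply intervalIntegral.integral_congr
        intro t _
        simp only []
        rw [hev t, Finset.mul_sum]
        congr 1; ext i; ring
    _ = ∑ i ∈ Finset.range k, ∫ t in a..b, v.coeff i * (g t * t ^ i) := by
        apply intervalIntegral.integral_finset_sum
        intro i _
        apply ContinuousOn.intervalIntegrable
        exact (continuousOn_const.mul (hg.mul (continuousOn_pow i)))
    _ = ∑ i ∈ Finset.range k, v.coeff i * ∫ t in a..b, g t * t ^ i := by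
        refine Finset.sum_congr rfl fun i _ => ?_
        exact intervalIntegral.integral_const_mul _ _

lemma local_unique_zero (k : ℕ) (hk : 1 ≤ k) (a b : ℝ) (hab : a < b) (p : ℝ[X])
    (hdeg : p.natDegree ≤ k)
    (hm : ∀ v : ℝ[X], v.natDegree ≤ k - 1 → (∫ t in a..b, p.eval t * v.eval t) = 0)
    (hb : p.eval b = 0) : p = 0 := by
  by_contra hp
  set s := p /ₘ (X - C b) with hs
  have hmonic : (X - C b).Monic := monic_X_sub_C b
  have hfact : (X - C b) * s = p := (mul_divByMonic_eq_iff_isRoot).2 hb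
  have hs0 : s ≠ 0 := by
    intro h
    apply hp
    rw [← hfact, h, mul_zero]
  have hsdeg : s.natDegree ≤ k - 1 := by
    have := natDegree_divByMonic p hmonic
    rw [natDegree_X_sub_C] at this
    rw [hs, this]
    omega
  have h0 : (∫ t in a..b, p.eval t * s.eval t) = 0 := hm s hsdeg
  have hint : ∀ t : ℝ, p.eval t * s.eval t = (t - b) * s.eval t ^ 2 := by
    intro t
    rw [← hfact]
    simp [eval_mul, eval_sub]
    ring
  -- g := (b - t) * s(t)^2 is nonneg with zero integral
  set g : ℝ → ℝ := fun t => (b - t) * s.eval t ^ 2 with hg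
  have hgc : Continuous g := by
    exact (continuous_const.sub continuous_id).mul ((s.continuous).pow 2)
  have hgint : (∫ t in a..b, g t) = 0 := by
    have : (∫ t in a..b, g t) = - ∫ t in a..b, p.eval t * s.eval t := by
      rw [← intervalIntegral.integral_neg]
      apply intervalIntegral.integral_congr
      intro t _
      simp only [hg, hint t]
      ring
    rw [this, h0, neg_zero]
  -- find a point t0 in Ioo a b where s ≠ 0
  obtain ⟨t0, ht0⟩ : ∃ t0, t0 ∈ Ioo a b \ {t | s.IsRoot t} := by
    have h1 : (Ioo a b).Infinite := Set.Ioo_infinite hab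
    have h2 : (Ioo a b \ {t | s.IsRoot t}).Infinite :=
      h1.diff (Polynomial.finite_setOf_isRoot hs0)
    exact h2.nonempty
  obtain ⟨ht0m, ht0r⟩ := ht0
  have hgt0 : 0 < g t0 := by
    have : s.eval t0 ≠ 0 := ht0r
    have h2 : 0 < s.eval t0 ^ 2 := by positivity
    have h3 : 0 < b - t0 := by linarith [ht0m.2]
    positivity
  -- find interval around t0 where g > 0
  obtain ⟨ε, hε, hball⟩ : ∃ ε > 0, ∀ t, |t - t0| < ε → 0 < g t := by
    have := hgc.continuousAt (x := t0)
    rw [Metric.continuousAt_iff] at this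
    obtain ⟨δ, hδ, hδ'⟩ := this (g t0) hgt0
    refine ⟨δ, hδ, fun t ht => ?_⟩
    have := hδ' (by simpa [Real.dist_eq] using ht)
    rw [Real.dist_eq] at this
    have := abs_lt.1 this
    linarith [this.1]
  set c := max a (t0 - ε/2) with hc
  set d := min b (t0 + ε/2) with hd
  have hac : a ≤ c := le_max_left _ _
  have hdb : d ≤ b := min_le_left _ _
  have hcd : c < d := by
    apply max_lt <;> apply lt_min
    · exact hab
    · linarith [ht0m.1]
    · linarith [ht0m.2]
    · linarith
  have hpos : ∀ t ∈ Ioo c d, 0 < g t := by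
    intro t ht
    apply hball
    rw [abs_lt]
    constructor
    · have : t0 - ε/2 ≤ c := le_max_right _ _
      have := ht.1; linarith
    · have : d ≤ t0 + ε/2 := min_le_right _ _
      have := ht.2; linarith
  have hint1 : ∀ u v : ℝ, IntervalIntegrable g volume u v :=
    fun u v => hgc.intervalIntegrable u v
  have hmid : 0 < ∫ t in c..d, g t :=
    intervalIntegral_pos_of_pos_on (hint1 c d) hpos hcd
  have hnn : ∀ u v : ℝ, u ≤ v → v ≤ b → 0 ≤ ∫ t in u..v, g t := by
    intro u v huv hvb
    apply intervalIntegral.integral_nonneg huv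
    intro t ht
    have h1 : 0 ≤ b - t := by have := ht.2; linarith
    have h2 : 0 ≤ s.eval t ^ 2 := sq_nonneg _
    exact mul_nonneg h1 h2
  have hsplit : (∫ t in a..b, g t) =
      (∫ t in a..c, g t) + ((∫ t in c..d, g t) + ∫ t in d..b, g t) := by
    rw [intervalIntegral.integral_add_adjacent_intervals (hint1 c d) (hint1 d b),
      intervalIntegral.integral_add_adjacent_intervals (hint1 a c) (hint1 c b)]
  have h1 := hnn a c hac (le_trans hcd.le hdb)
  have h2 := hnn d b hdb le_rfl
  rw [hgint] at hsplit
  linarith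

noncomputable def momentMap (k : ℕ) (a b : ℝ) : ℝ[X] →ₗ[ℝ] (Fin (k + 1) → ℝ) where
  toFun p := fun i => if (i : ℕ) < k then (∫ t in a..b, p.eval t * t ^ (i : ℕ)) else p.eval b
  map_add' p q := by
    funext i
    by_cases h : (i : ℕ) < k <;> simp [h]
    rw [← intervalIntegral.integral_add]
    · apply intervalIntegral.integral_congr; intro t _; simp; ring
    · exact (p.continuous.mul (continuous_pow _)).intervalIntegrable a b
    · exact (q.continuous.mul (continuous_pow _)).intervalIntegrable a b
  map_smul' r p := by
    funext i
    by_cases h : (i : ℕ) < k <;> simp [h]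
    rw [← intervalIntegral.integral_const_mul]
    apply intervalIntegral.integral_congr; intro t _; simp; ring

lemma local_exu (k : ℕ) (hk : 1 ≤ k) (a b : ℝ) (hab : a < b) (w : ℝ → ℝ)
    (hw : ContinuousOn w (uIcc a b)) (c : ℝ) :
    ∃! p : ℝ[X], p.natDegree ≤ k ∧
      (∀ v : ℝ[X], v.natDegree ≤ k - 1 →
        (∫ t in a..b, p.eval t * v.eval t) = ∫ t in a..b, w t * v.eval t) ∧
      p.eval b = c := by
  -- the restricted moment map
  set L : degreeLT ℝ (k+1) →ₗ[ℝ] (Fin (k+1) → ℝ) :=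
    (momentMap k a b).comp (degreeLT ℝ (k+1)).subtype with hL
  have hmem : ∀ p : ℝ[X], p.natDegree ≤ k ↔ p ∈ degreeLT ℝ (k+1) := by
    intro p
    rw [mem_degreeLT]
    constructor
    · intro h
      calc p.degree ≤ p.natDegree := degree_le_natDegree
        _ < (k+1 : ℕ) := by exact_mod_cast Nat.lt_succ_of_le h
    · intro h
      by_cases hp : p = 0
      · simp [hp]
      · have := (natDegree_lt_iff_degree_lt hp).2 (by exact_mod_cast h)
        omega
  -- key: zero moments for monomials ⇒ zero moments for all v of deg ≤ k-1
  have hexpand : ∀ p : ℝ[X], ∀ v : ℝ[X], v.natDegree ≤ k - 1 →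
      (∫ t in a..b, p.eval t * v.eval t) =
        ∑ i ∈ Finset.range k, v.coeff i * ∫ t in a..b, p.eval t * t ^ i :=
    fun p v hv => expand_moments k hk a b _ (p.continuous.continuousOn) v hv
  have hwexpand : ∀ v : ℝ[X], v.natDegree ≤ k - 1 →
      (∫ t in a..b, w t * v.eval t) =
        ∑ i ∈ Finset.range k, v.coeff i * ∫ t in a..b, w t * t ^ i :=
    fun v hv => expand_moments k hk a b _ hw v hv
  have hinj : Function.Injective L := by
    rw [← LinearMap.ker_eq_bot, Submodule.eq_bot_iff]
    rintro ⟨p, hp⟩ hker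
    have hmom : ∀ i : ℕ, i < k → (∫ t in a..b, p.eval t * t ^ i) = 0 := by
      intro i hi
      have := congrFun hker ⟨i, by omega⟩
      simpa [hL, momentMap, hi] using this
    have hpb : p.eval b = 0 := by
      have := congrFun hker ⟨k, by omega⟩
      simpa [hL, momentMap] using this
    have : p = 0 := by
      apply local_unique_zero k hk a b hab p ((hmem p).2 hp)
      · intro v hv
        rw [hexpand p v hv]
        apply Finset.sum_eq_zero
        intro i hi
        rw [hmom i (Finset.mem_range.1 hi), mul_zero]
      · exact hpb
    simpa using this
  have hfr : Module.finrank ℝ (degreeLT ℝ (k+1)) = Module.finrank ℝ (Fin (k+1) → ℝ) := by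
    rw [LinearEquiv.finrank_eq (degreeLTEquiv ℝ (k+1))]
  have : FiniteDimensional ℝ (degreeLT ℝ (k+1)) :=
    Module.Finite.equiv (degreeLTEquiv ℝ (k+1)).symm
  have hsurj : Function.Surjective L :=
    (LinearMap.injective_iff_surjective_of_finrank_eq_finrank hfr).1 hinj
  -- target vector
  set y : Fin (k+1) → ℝ :=
    fun i => if (i : ℕ) < k then (∫ t in a..b, w t * t ^ (i : ℕ)) else c with hy
  obtain ⟨⟨p, hpmem⟩, hpL⟩ := hsurj y
  have hpdeg : p.natDegree ≤ k := (hmem p).2 hpmem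
  have hpmom : ∀ i : ℕ, i < k →
      (∫ t in a..b, p.eval t * t ^ i) = ∫ t in a..b, w t * t ^ i := by
    intro i hi
    have := congrFun hpL ⟨i, by omega⟩
    simpa [hL, hy, momentMap, hi] using this
  have hpb : p.eval b = c := by
    have := congrFun hpL ⟨k, by omega⟩
    simpa [hL, hy, momentMap] using this
  refine ⟨p, ⟨hpdeg, ?_, hpb⟩, ?_⟩
  · intro v hv
    rw [hexpand p v hv, hwexpand v hv]
    refine Finset.sum_congr rfl fun i hi => ?_
    rw [hpmom i (Finset.mem_range.1 hi)]
  · rintro q ⟨hqdeg, hqmom, hqb⟩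
    have hz : q - p = 0 := by
      apply local_unique_zero k hk a b hab (q - p)
      · exact le_trans (natDegree_sub_le q p) (max_le hqdeg hpdeg)
      · intro v hv
        have h1 := hqmom v hv
        have h2 : (∫ t in a..b, p.eval t * v.eval t) = ∫ t in a..b, w t * v.eval t := by
          rw [hexpand p v hv, hwexpand v hv]
          exact Finset.sum_congr rfl fun i hi => by rw [hpmom i (Finset.mem_range.1 hi)]
        have hsub : (∫ t in a..b, (q - p).eval t * v.eval t) =
            (∫ t in a..b, q.eval t * v.eval t) - ∫ t in a..b, p.eval t * v.eval t := by
          rw [← intervalIntegral.integral_sub]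
          · apply intervalIntegral.integral_congr; intro t _; simp; ring
          · exact (q.continuous.mul v.continuous).intervalIntegrable a b
          · exact (p.continuous.mul v.continuous).intervalIntegrable a b
        rw [hsub, h1, h2, sub_self]
      · simp [hqb, hpb]
    have := sub_eq_zero.1 hz
    exact this

open scoped Classical in
noncomputable def localP (k : ℕ) (a b : ℝ) (w : ℝ → ℝ) (c : ℝ) : ℝ[X] :=
  if h : 1 ≤ k ∧ a < b ∧ ContinuousOn w (Set.uIcc a b) then
    (local_exu k h.1 a b h.2.1 w h.2.2 c).exists.choose
  else 0

lemma localP_spec (k : ℕ) (hk : 1 ≤ k) (a b : ℝ) (hab : a < b) (w : ℝ → ℝ)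
    (hw : ContinuousOn w (Set.uIcc a b)) (c : ℝ) :
    (localP k a b w c).natDegree ≤ k ∧
      (∀ v : ℝ[X], v.natDegree ≤ k - 1 →
        (∫ t in a..b, (localP k a b w c).eval t * v.eval t) = ∫ t in a..b, w t * v.eval t) ∧
      (localP k a b w c).eval b = c := by
  classical
  rw [localP, dif_pos ⟨hk, hab, hw⟩]
  exact (local_exu k hk a b hab w hw c).exists.choose_spec

noncomputable def PP (k N : ℕ) (x : ℕ → ℝ) (w : ℝ → ℝ) (θ : ℝ) : ℕ → ℝ[X]
  | 0 => localP k (x (N-1)) (x N) w (w (x N))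
  | (i+1) => localP k (x (N-i-2)) (x (N-i-1)) w
      ((w (x (N-i-1)) - (1-θ) * ((PP k N x w θ i).eval (x (N-i-1))))/θ)

/-- Existence and uniqueness of the global projection `P^{(θ)}w` into piecewise
polynomials of degree at most `k`, defined by the cell moment conditions, the
interior interface conditions, and the right endpoint condition. -/
theorem stmt_11 (k : ℕ) (hk : 1 ≤ k) (N : ℕ) (hN : 1 ≤ N)
    (θ : ℝ) (hθ : 1 / 2 < θ)
    (x : ℕ → ℝ) (hx0 : x 0 = 0) (hxN : x N = 1)
    (hmono : ∀ j, 1 ≤ j → j ≤ N → x (j - 1) < x j)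
    (w : ℝ → ℝ) (hw : ContinuousOn w (Icc 0 1)) :
    ∃ p : ℕ → Polynomial ℝ,
      ((∀ j, 1 ≤ j → j ≤ N → (p j).natDegree ≤ k) ∧
       (∀ j, 1 ≤ j → j ≤ N → ∀ v : Polynomial ℝ, v.natDegree ≤ k - 1 →
         (∫ t in (x (j - 1))..(x j), (p j).eval t * v.eval t) =
           ∫ t in (x (j - 1))..(x j), w t * v.eval t) ∧
       (∀ j, 1 ≤ j → j ≤ N - 1 →
         θ * (p j).eval (x j) + (1 - θ) * (p (j + 1)).eval (x j) = w (x j)) ∧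
       (p N).eval (x N) = w (x N)) ∧
      ∀ q : ℕ → Polynomial ℝ,
        ((∀ j, 1 ≤ j → j ≤ N → (q j).natDegree ≤ k) ∧
         (∀ j, 1 ≤ j → j ≤ N → ∀ v : Polynomial ℝ, v.natDegree ≤ k - 1 →
           (∫ t in (x (j - 1))..(x j), (q j).eval t * v.eval t) =
             ∫ t in (x (j - 1))..(x j), w t * v.eval t) ∧
         (∀ j, 1 ≤ j → j ≤ N - 1 →
           θ * (q j).eval (x j) + (1 - θ) * (q (j + 1)).eval (x j) = w (x j)) ∧
         (q N).eval (x N) = w (x N)) →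
        ∀ j, 1 ≤ j → j ≤ N → q j = p j := by
  have hθ0 : θ ≠ 0 := by intro h; rw [h] at hθ; linarith
  -- monotonicity facts
  have hmono' : ∀ j, j ≤ N → ∀ i, i ≤ j → x i ≤ x j := by
    intro j
    induction j with
    | zero => intro _ i hi; interval_cases i; exact le_rfl
    | succ n ih =>
      intro hN' i hi
      rcases Nat.lt_or_ge i (n+1) with h | h
      · have h1 : x i ≤ x n := ih (by omega) i (by omega)
        have h2 : x n < x (n+1) := by
          have := hmono (n+1) (by omega) hN'
          simpa using this
        linarith
      · have : i = n+1 := by omega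
        rw [this]
  have hcont : ∀ j : ℕ, 1 ≤ j → j ≤ N → ContinuousOn w (uIcc (x (j-1)) (x j)) := by
    intro j h1 h2
    apply hw.mono
    rw [uIcc_of_le (hmono j h1 h2).le]
    intro t ht
    constructor
    · rw [← hx0]; exact le_trans (hmono' (j-1) (by omega) 0 (by omega)) ht.1
    · rw [← hxN]; exact le_trans ht.2 (hmono' N le_rfl j h2)
  -- the constructed family
  set p : ℕ → Polynomial ℝ := fun j => PP k N x w θ (N - j) with hp
  -- characterization of p j
  have hPP : ∀ j, 1 ≤ j → j ≤ N → p j = localP k (x (j-1)) (x j) w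
      (if j = N then w (x N) else (w (x j) - (1-θ) * ((p (j+1)).eval (x j)))/θ) := by
    intro j h1 h2
    by_cases hj : j = N
    · have hz : N - j = 0 := by omega
      show PP k N x w θ (N - j) = _
      rw [hz, if_pos hj]
      show localP k (x (N-1)) (x N) w (w (x N)) = _
      rw [hj]
    · have hjlt : j < N := lt_of_le_of_ne h2 hj
      have he : N - j = (N - j - 1) + 1 := by omega
      show PP k N x w θ (N - j) = _
      rw [he, if_neg hj]
      show localP k (x (N-(N-j-1)-2)) (x (N-(N-j-1)-1)) w _ = _
      have e1 : N-(N-j-1)-2 = j-1 := by omega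
      have e2 : N-(N-j-1)-1 = j := by omega
      have e3 : N - j - 1 = N - (j+1) := by omega
      rw [e1, e2, e3]
  -- spec of p j
  have hspec : ∀ j, 1 ≤ j → j ≤ N →
      (p j).natDegree ≤ k ∧
      (∀ v : ℝ[X], v.natDegree ≤ k - 1 →
        (∫ t in (x (j-1))..(x j), (p j).eval t * v.eval t) =
          ∫ t in (x (j-1))..(x j), w t * v.eval t) ∧
      (p j).eval (x j) =
        (if j = N then w (x N) else (w (x j) - (1-θ) * ((p (j+1)).eval (x j)))/θ) := by
    intro j h1 h2
    rw [hPP j h1 h2]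
    exact localP_spec k hk _ _ (hmono j h1 h2) w (hcont j h1 h2) _
  refine ⟨p, ⟨?_, ?_, ?_, ?_⟩, ?_⟩
  · intro j h1 h2; exact (hspec j h1 h2).1
  · intro j h1 h2; exact (hspec j h1 h2).2.1
  · intro j h1 h2
    have hjlt : j ≠ N := by omega
    have := (hspec j h1 (by omega)).2.2
    rw [if_neg hjlt] at this
    rw [this]
    field_simp
    ring
  · have := (hspec N hN le_rfl).2.2
    rw [if_pos rfl] at this
    rw [this]
  · rintro q ⟨hqdeg, hqmom, hqface, hqend⟩
    have key : ∀ d, ∀ j, 1 ≤ j → j ≤ N → N - j = d → q j = p j := by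
      intro d
      induction d with
      | zero =>
        intro j h1 h2 h3
        have : j = N := by omega
        subst this
        have hpe := (hspec j h1 h2)
        rw [if_pos rfl] at hpe
        exact (local_exu k hk (x (j-1)) (x j) (hmono j h1 h2) w (hcont j h1 h2)
          (w (x j))).unique ⟨hqdeg j h1 h2, hqmom j h1 h2, hqend⟩
          ⟨hpe.1, hpe.2.1, hpe.2.2⟩
      | succ d ih =>
        intro j h1 h2 h3
        have hjlt : j < N := by omega
        have hq1 : q (j+1) = p (j+1) := ih (j+1) (by omega) (by omega) (by omega)
        have hpe := (hspec j h1 h2)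
        rw [if_neg (by omega : j ≠ N)] at hpe
        have hface := hqface j h1 (by omega)
        rw [hq1] at hface
        have hc : (q j).eval (x j) =
            (w (x j) - (1-θ) * ((p (j+1)).eval (x j)))/θ := by
          field_simp
          linarith
        rw [← hpe.2.2] at hc
        exact (local_exu k hk (x (j-1)) (x j) (hmono j h1 h2) w (hcont j h1 h2)
          ((p j).eval (x j))).unique ⟨hqdeg j h1 h2, hqmom j h1 h2, hc⟩
          ⟨hpe.1, hpe.2.1, rfl⟩
    intro j h1 h2
    exact key (N - j) j h1 h2 rfl
end

section
/- Let k ≥ 1 be an integer and θ a real number with 1/2 < θ ≤ 1. There exists a constant C > 0, depending only on k and θ, such that the following holds. Let N ≥ 1, let 0 = x₀ < x₁ < ... < x_N = 1 be any partition with h_j = x_j - x_{j-1} and h = max_{1 ≤ j ≤ N} h_j, let w : [0,1] → ℝ be (k+1)-times continuously differentiable, and let p₁, ..., p_N be polynomials of degree at most k satisfying: (i) ∫_{x_{j-1}}^{x_j} p_j(x) v(x) dx = ∫_{x_{j-1}}^{x_j} w(x) v(x) dx for every polynomial v of degree at most k-1 and every j; (ii) θ p_j(x_j) + (1-θ) p_{j+1}(x_j)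 = w(x_j) for j = 1, ..., N-1; (iii) p_N(x_N) = w(x_N). Then for every j = 1, ..., N, (∫_{x_{j-1}}^{x_j} (w(x) - p_j(x))² dx)^{1/2} ≤ C h^{k+3/2} max_{0 ≤ i ≤ k+1} sup_{x ∈ [0,1]} |w^{(i)}(x)|. -/
open Set Polynomial intervalIntegral


lemma polyMul_intervalIntegrable (f : ℝ → ℝ) (hf : ContinuousOn f (Icc 0 1)) (q : ℝ[X]) (i : ℕ) :
    IntervalIntegrable (fun t => f t * (q.eval t) * t ^ i) MeasureTheory.volume 0 1 := by
  apply ContinuousOn.intervalIntegrable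
  rw [uIcc_of_le (by norm_num : (0:ℝ) ≤ 1)]
  exact (hf.mul (q.continuousOn)).mul (continuousOn_pow i)

lemma moments_poly {k : ℕ} (hk : 1 ≤ k) {q : ℝ[X]}
    (hm : ∀ i < k, (∫ t in (0:ℝ)..1, q.eval t * t ^ i) = 0)
    {v : ℝ[X]} (hv : v.natDegree ≤ k - 1) :
    (∫ t in (0:ℝ)..1, q.eval t * v.eval t) = 0 := by
  have hvk : v.natDegree < k := by omega
  have hev : ∀ t : ℝ, q.eval t * v.eval t
      = ∑ i ∈ Finset.range k, (v.coeff i) * (q.eval t * t ^ i) := by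
    intro t
    rw [Polynomial.eval_eq_sum_range' hvk]
    rw [Finset.mul_sum]
    apply Finset.sum_congr rfl
    intro i _
    ring
  have : (∫ t in (0:ℝ)..1, q.eval t * v.eval t)
      = ∑ i ∈ Finset.range k, (v.coeff i) * ∫ t in (0:ℝ)..1, q.eval t * t ^ i := by
    simp_rw [hev]
    rw [intervalIntegral.integral_finset_sum]
    · apply Finset.sum_congr rfl
      intro i _
      rw [← intervalIntegral.integral_const_mul]
    · intro i _
      apply IntervalIntegrable.const_mul
      apply ContinuousOn.intervalIntegrable
      exact ((q.continuousOn).mul (continuousOn_pow i))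
  rw [this]
  apply Finset.sum_eq_zero
  intro i hi
  rw [hm i (Finset.mem_range.mp hi), mul_zero]

lemma key_injective {k : ℕ} (hk : 1 ≤ k) {q : ℝ[X]} (hq : q.natDegree ≤ k)
    (hm : ∀ i < k, (∫ t in (0:ℝ)..1, q.eval t * t ^ i) = 0)
    (h1 : q.eval 1 = 0) : q = 0 := by
  have hdvd : (X - C (1:ℝ)) ∣ q := Polynomial.dvd_iff_isRoot.mpr h1
  obtain ⟨r, hr⟩ := hdvd
  rcases eq_or_ne r 0 with h0 | h0
  · rw [hr, h0, mul_zero]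
  have hXne : (X - C (1:ℝ)) ≠ 0 := Polynomial.X_sub_C_ne_zero 1
  have hdeg : r.natDegree ≤ k - 1 := by
    have := Polynomial.natDegree_mul hXne h0
    rw [← hr] at this
    rw [Polynomial.natDegree_X_sub_C] at this
    omega
  have hint : (∫ t in (0:ℝ)..1, q.eval t * r.eval t) = 0 := moments_poly hk hm hdeg
  -- q.eval t * r.eval t = (t - 1) * (r.eval t)^2
  have hev : ∀ t : ℝ, q.eval t * r.eval t = (t - 1) * (r.eval t) ^ 2 := by
    intro t; rw [hr]; simp; ring
  -- hence ∫ (1-t) r^2 = 0, with nonneg integrand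
  have hlt : (∫ t in (0:ℝ)..1, (1 - t) * (r.eval t) ^ 2) = 0 := by
    have : (∫ t in (0:ℝ)..1, (1 - t) * (r.eval t) ^ 2)
        = - ∫ t in (0:ℝ)..1, q.eval t * r.eval t := by
      rw [← intervalIntegral.integral_neg]
      apply intervalIntegral.integral_congr
      intro t _
      simp only []
      rw [hev t]; ring
    rw [this, hint, neg_zero]
  -- r has a nonroot in Ioo 0 1 unless r = 0
  have hroots : ∀ t ∈ Ioo (0:ℝ) 1, r.eval t = 0 := by
    by_contra hcon
    push_neg at hcon
    obtain ⟨c, hc, hcne⟩ := hcon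
    have hpos : (0:ℝ) < ∫ t in (0:ℝ)..1, (1 - t) * (r.eval t) ^ 2 := by
      have := intervalIntegral.integral_lt_integral_of_continuousOn_of_le_of_exists_lt
        (f := fun _ => (0:ℝ)) (g := fun t => (1 - t) * (r.eval t) ^ 2)
        (a := 0) (b := 1) (by norm_num) (continuousOn_const)
        (((continuousOn_const.sub continuousOn_id).mul ((r.continuousOn).pow 2)))
        ?_ ?_
      · simpa using this
      · intro t ht
        have h1t : 0 ≤ 1 - t := by linarith [ht.2]
        positivity
      · refine ⟨c, ⟨hc.1.le, hc.2.le⟩, ?_⟩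
        have h1c : 0 < 1 - c := by linarith [hc.2]
        have : 0 < (r.eval c) ^ 2 := by positivity
        positivity
    rw [hlt] at hpos; exact lt_irrefl 0 hpos
  exact absurd (Polynomial.eq_zero_of_infinite_isRoot r
    ((Set.Ioo_infinite (by norm_num : (0:ℝ) < 1)).mono (fun t ht => hroots t ht))) h0


section Ref
variable (k : ℕ)

/-- polynomial from coefficient vector -/
noncomputable def polOf (c : Fin (k+1) → ℝ) : ℝ[X] :=
  ∑ i : Fin (k+1), C (c i) * X ^ (i : ℕ)

lemma polOf_natDegree (c : Fin (k+1) → ℝ) : (polOf k c).natDegree ≤ k := by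
  apply Polynomial.natDegree_sum_le_of_forall_le
  intro i _
  apply le_trans (Polynomial.natDegree_C_mul_le _ _)
  simp [Polynomial.natDegree_X_pow]
  omega

lemma polOf_coeff (c : Fin (k+1) → ℝ) (m : Fin (k+1)) : (polOf k c).coeff m = c m := by
  unfold polOf
  rw [Polynomial.finset_sum_coeff]
  rw [Finset.sum_eq_single m]
  · simp
  · intro i _ hne
    simp only [Polynomial.coeff_C_mul, Polynomial.coeff_X_pow]
    rw [if_neg, mul_zero]
    exact fun hc => hne (Fin.ext hc.symm)
  · simp

lemma polOf_eval (c : Fin (k+1) → ℝ) (t : ℝ) :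
    (polOf k c).eval t = ∑ i : Fin (k+1), c i * t ^ (i:ℕ) := by
  unfold polOf
  rw [Polynomial.eval_finset_sum]
  simp

lemma polOf_surj {q : ℝ[X]} (hq : q.natDegree ≤ k) : polOf k (fun i => q.coeff i) = q := by
  ext n
  rcases lt_or_ge n (k+1) with hn | hn
  · exact polOf_coeff k _ ⟨n, hn⟩
  · rw [Polynomial.coeff_eq_zero_of_natDegree_lt (lt_of_le_of_lt hq (by omega))]
    rcases Polynomial.natDegree_le_iff_coeff_eq_zero.mp (polOf_natDegree k (fun i => q.coeff i))
      n (by omega) with h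
    exact h

/-- the moments+endpoint linear map -/
noncomputable def lamMap : (Fin (k+1) → ℝ) →ₗ[ℝ] (Fin (k+1) → ℝ) where
  toFun c := fun j => if (j:ℕ) < k then ∑ i : Fin (k+1), c i / ((i:ℕ) + (j:ℕ) + 1) else ∑ i, c i
  map_add' c d := by
    funext j
    simp only [Pi.add_apply]
    split_ifs <;> simp [add_div, Finset.sum_add_distrib]
  map_smul' a c := by
    funext j
    simp only [Pi.smul_apply, RingHom.id_apply, smul_eq_mul]
    split_ifs <;> simp [Finset.mul_sum, mul_div_assoc]

lemma lamMap_moment (c : Fin (k+1) → ℝ) (j : Fin (k+1)) (hj : (j:ℕ) < k) :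
    lamMap k c j = ∫ t in (0:ℝ)..1, (polOf k c).eval t * t ^ (j:ℕ) := by
  have : ∀ t : ℝ, (polOf k c).eval t * t ^ (j:ℕ)
      = ∑ i : Fin (k+1), c i * t ^ ((i:ℕ) + (j:ℕ)) := by
    intro t
    rw [polOf_eval, Finset.sum_mul]
    exact Finset.sum_congr rfl fun i _ => by rw [pow_add]; ring
  simp_rw [this]
  rw [intervalIntegral.integral_finset_sum]
  · unfold lamMap
    simp only [LinearMap.coe_mk, AddHom.coe_mk, if_pos hj]
    apply Finset.sum_congr rfl
    intro i _
    rw [intervalIntegral.integral_const_mul, integral_pow]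
    push_cast
    ring
  · intro i _
    exact (continuous_const.mul (continuous_pow _)).intervalIntegrable 0 1

lemma lamMap_eval1 (c : Fin (k+1) → ℝ) (j : Fin (k+1)) (hj : ¬ (j:ℕ) < k) :
    lamMap k c j = (polOf k c).eval 1 := by
  unfold lamMap
  simp only [LinearMap.coe_mk, AddHom.coe_mk, if_neg hj]
  rw [polOf_eval]
  simp

end Ref
section RefA
variable {k : ℕ}

lemma lamMap_inj (hk : 1 ≤ k) : Function.Injective (lamMap k) := by
  rw [← LinearMap.ker_eq_bot, LinearMap.ker_eq_bot']
  intro c hc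
  have h0 : polOf k c = 0 := by
    apply key_injective hk (polOf_natDegree k c)
    · intro i hi
      have := congrFun hc ⟨i, by omega⟩
      rw [lamMap_moment k c ⟨i, by omega⟩ hi] at this
      simpa using this
    · have := congrFun hc ⟨k, by omega⟩
      rw [lamMap_eval1 k c ⟨k, by omega⟩ (by simp)] at this
      simpa using this
  funext m
  have := polOf_coeff k c m
  rw [h0] at this
  simpa using this.symm

lemma lamMap_surj (hk : 1 ≤ k) : Function.Surjective (lamMap k) :=
  (LinearMap.injective_iff_surjective).mp (lamMap_inj hk)

/-- reference estimate: sup norm controlled by moments and endpoint value -/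
lemma refA (hk : 1 ≤ k) : ∃ C > 0, ∀ q : ℝ[X], q.natDegree ≤ k →
    ∀ t ∈ Icc (0:ℝ) 1, |q.eval t| ≤
      C * ((∑ i ∈ Finset.range k, |∫ s in (0:ℝ)..1, q.eval s * s ^ i|) + |q.eval 1|) := by
  set e : (Fin (k+1) → ℝ) ≃ₗ[ℝ] (Fin (k+1) → ℝ) :=
    LinearEquiv.ofBijective (lamMap k) ⟨lamMap_inj hk, lamMap_surj hk⟩ with he
  set Φ : (Fin (k+1) → ℝ) →L[ℝ] (Fin (k+1) → ℝ) :=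
    LinearMap.toContinuousLinearMap (e.symm : (Fin (k+1) → ℝ) →ₗ[ℝ] (Fin (k+1) → ℝ)) with hΦ
  refine ⟨(k+1) * (‖Φ‖ + 1), by positivity, ?_⟩
  intro q hq t ht
  set c : Fin (k+1) → ℝ := fun i => q.coeff i with hc
  have hpol : polOf k c = q := polOf_surj k hq
  set S := (∑ i ∈ Finset.range k, |∫ s in (0:ℝ)..1, q.eval s * s ^ i|) + |q.eval 1| with hS
  have hS0 : 0 ≤ S := by
    apply add_nonneg _ (abs_nonneg _)
    exact Finset.sum_nonneg fun i _ => abs_nonneg _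
  -- ‖lamMap k c‖ ≤ S
  have hlam : ‖lamMap k c‖ ≤ S := by
    apply pi_norm_le_iff_of_nonneg hS0 |>.mpr
    intro j
    rcases lt_or_ge (j:ℕ) k with hj | hj
    · rw [Real.norm_eq_abs, lamMap_moment k c j hj, hpol]
      calc |∫ s in (0:ℝ)..1, q.eval s * s ^ (j:ℕ)|
          ≤ ∑ i ∈ Finset.range k, |∫ s in (0:ℝ)..1, q.eval s * s ^ i| :=
            Finset.single_le_sum (f := fun i => |∫ s in (0:ℝ)..1, q.eval s * s ^ i|)
              (fun i _ => abs_nonneg _) (Finset.mem_range.mpr hj)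
        _ ≤ S := le_add_of_nonneg_right (abs_nonneg _)
    · rw [Real.norm_eq_abs, lamMap_eval1 k c j (not_lt.mpr hj), hpol]
      exact le_add_of_nonneg_left (Finset.sum_nonneg fun i _ => abs_nonneg _)
  have hcS : ‖c‖ ≤ ‖Φ‖ * S := by
    have : c = Φ (lamMap k c) := by
      simp [hΦ, he]
      exact ((LinearEquiv.ofBijective (lamMap k) ⟨lamMap_inj hk, lamMap_surj hk⟩).symm_apply_apply c).symm
    calc ‖c‖ = ‖Φ (lamMap k c)‖ := by rw [← this]
      _ ≤ ‖Φ‖ * ‖lamMap k c‖ := Φ.le_opNorm _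
      _ ≤ ‖Φ‖ * S := by
          apply mul_le_mul_of_nonneg_left hlam (norm_nonneg _)
  -- evaluate
  have : |q.eval t| ≤ (k+1) * ‖c‖ := by
    rw [← hpol, polOf_eval]
    calc |∑ i : Fin (k+1), c i * t ^ (i:ℕ)| ≤ ∑ i : Fin (k+1), |c i * t ^ (i:ℕ)| :=
        Finset.abs_sum_le_sum_abs _ _
      _ ≤ ∑ _i : Fin (k+1), ‖c‖ := by
          apply Finset.sum_le_sum
          intro i _
          rw [abs_mul]
          have h1 : |c i| ≤ ‖c‖ := by
            rw [← Real.norm_eq_abs]; exact norm_le_pi_norm c i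
          have h2 : |t ^ (i:ℕ)| ≤ 1 := by
            rw [abs_pow]
            apply pow_le_one₀ (abs_nonneg _)
            rw [abs_le]; constructor <;> linarith [ht.1, ht.2]
          calc |c i| * |t ^ (i:ℕ)| ≤ |c i| * 1 :=
              mul_le_mul_of_nonneg_left h2 (abs_nonneg _)
            _ ≤ ‖c‖ := by rw [mul_one]; exact h1
      _ = (k+1) * ‖c‖ := by simp [Finset.card_univ, mul_comm]
  calc |q.eval t| ≤ (k+1) * ‖c‖ := this
    _ ≤ (k+1) * (‖Φ‖ * S) := by
        apply mul_le_mul_of_nonneg_left hcS (by positivity)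
    _ ≤ (k+1) * (‖Φ‖ + 1) * S := by
        rw [mul_assoc]
        apply mul_le_mul_of_nonneg_left _ (by positivity)
        apply mul_le_mul_of_nonneg_right _ hS0
        linarith

/-- the normalized zero-moment polynomial -/
lemma qstar_exists (hk : 1 ≤ k) : ∃ qs : ℝ[X], qs.natDegree ≤ k ∧
    (∀ i < k, (∫ t in (0:ℝ)..1, qs.eval t * t ^ i) = 0) ∧ qs.eval 1 = 1 ∧
    (qs.eval 0) ^ 2 = 1 := by
  obtain ⟨c, hc⟩ := lamMap_surj hk (fun j => if (j:ℕ) < k then 0 else 1)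
  refine ⟨polOf k c, polOf_natDegree k c, ?_, ?_, ?_⟩
  · intro i hi
    have := congrFun hc ⟨i, by omega⟩
    rw [lamMap_moment k c ⟨i, by omega⟩ hi] at this
    simpa [hi] using this
  · have := congrFun hc ⟨k, by omega⟩
    rw [lamMap_eval1 k c ⟨k, by omega⟩ (by simp)] at this
    simpa using this
  · -- reflection argument
    set qs := polOf k c with hqs
    have hdeg : qs.natDegree ≤ k := polOf_natDegree k c
    have hmom : ∀ i < k, (∫ t in (0:ℝ)..1, qs.eval t * t ^ i) = 0 := by
      intro i hi
      have := congrFun hc ⟨i, by omega⟩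
      rw [lamMap_moment k c ⟨i, by omega⟩ hi] at this
      simpa [hi] using this
    have h1 : qs.eval 1 = 1 := by
      have := congrFun hc ⟨k, by omega⟩
      rw [lamMap_eval1 k c ⟨k, by omega⟩ (by simp)] at this
      simpa using this
    set l := qs.eval 0 with hl
    set Q : ℝ[X] := qs.comp (C 1 - X) with hQ
    have hQeval : ∀ t : ℝ, Q.eval t = qs.eval (1 - t) := by
      intro t; rw [hQ, Polynomial.eval_comp]; simp
    have hQdeg : Q.natDegree ≤ k := by
      rw [hQ, Polynomial.natDegree_comp]
      have : (C (1:ℝ) - X).natDegree = 1 := by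
        have : (C (1:ℝ) - X) = -(X - C 1) := by ring
        rw [this, Polynomial.natDegree_neg, Polynomial.natDegree_X_sub_C]
      rw [this, mul_one]; exact hdeg
    have hQmom : ∀ i < k, (∫ t in (0:ℝ)..1, Q.eval t * t ^ i) = 0 := by
      intro i hi
      have hsub : (∫ t in (0:ℝ)..1, Q.eval t * t ^ i)
          = ∫ t in (0:ℝ)..1, qs.eval t * (1 - t) ^ i := by
        have := intervalIntegral.integral_comp_sub_left
          (a := (0:ℝ)) (b := 1) (fun u => qs.eval u * (1 - u) ^ i) 1
        simp only [sub_self, sub_zero] at this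
        rw [← this]
        apply intervalIntegral.integral_congr
        intro t _
        simp only []
        rw [hQeval t]
        ring_nf
      rw [hsub]
      have : ∀ t : ℝ, qs.eval t * (1 - t) ^ i = qs.eval t * ((C 1 - X : ℝ[X])^i).eval t := by
        intro t; simp
      simp_rw [this]
      apply moments_poly hk hmom
      apply le_trans (Polynomial.natDegree_pow_le)
      have : (C (1:ℝ) - X).natDegree = 1 := by
        have : (C (1:ℝ) - X) = -(X - C 1) := by ring
        rw [this, Polynomial.natDegree_neg, Polynomial.natDegree_X_sub_C]
      rw [this, mul_one]; omega
    set D : ℝ[X] := Q - C l * qs with hD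
    have hDdeg : D.natDegree ≤ k := by
      apply le_trans (Polynomial.natDegree_sub_le _ _)
      apply max_le hQdeg
      exact le_trans (Polynomial.natDegree_C_mul_le _ _) hdeg
    have hDmom : ∀ i < k, (∫ t in (0:ℝ)..1, D.eval t * t ^ i) = 0 := by
      intro i hi
      have hev : ∀ t : ℝ, D.eval t * t ^ i = Q.eval t * t ^ i - l * (qs.eval t * t ^ i) := by
        intro t; rw [hD]; simp; ring
      simp_rw [hev]
      rw [intervalIntegral.integral_sub, intervalIntegral.integral_const_mul,
        hQmom i hi, hmom i hi, mul_zero, sub_zero]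
      · exact ((Q.continuous).mul (continuous_pow i)).intervalIntegrable 0 1
      · apply IntervalIntegrable.const_mul
        exact ((qs.continuous).mul (continuous_pow i)).intervalIntegrable 0 1
    have hD1 : D.eval 1 = 0 := by
      rw [hD]; simp [hQeval 1, h1]; exact sub_eq_zero.mpr hl.symm
    have hD0 : D = 0 := key_injective hk hDdeg hDmom hD1
    have := congrArg (Polynomial.eval (0:ℝ)) hD0
    rw [hD] at this
    simp only [Polynomial.eval_sub, Polynomial.eval_mul, Polynomial.eval_C,
      Polynomial.eval_zero] at this
    rw [hQeval 0] at this
    simp only [sub_zero, h1] at this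
    -- this : 1 - l * l = 0
    nlinarith [this]

end RefA
/-- scaled cell estimate -/
lemma cell_bound {k : ℕ} (hk : 1 ≤ k) : ∃ C > 0, ∀ a b : ℝ, a < b → ∀ δ : ℝ, 0 ≤ δ →
    ∀ q : ℝ[X], q.natDegree ≤ k →
    (∀ i < k, |∫ t in a..b, q.eval t * ((t - a)/(b - a)) ^ i| ≤ (b - a) * δ) →
    (∀ t ∈ Icc a b, |q.eval t| ≤ C * (δ + |q.eval b|)) ∧
      |q.eval a| ≤ |q.eval b| + C * δ := by
  obtain ⟨CA, hCA, hrefA⟩ := refA hk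
  obtain ⟨qs, hqsdeg, hqsmom, hqs1, hqs0⟩ := qstar_exists hk
  have hqsabs : |qs.eval 0| = 1 := by
    rcases abs_cases (qs.eval 0) with ⟨h1, h2⟩ | ⟨h1, h2⟩ <;> nlinarith
  have hqsbd : ∀ τ ∈ Icc (0:ℝ) 1, |qs.eval τ| ≤ CA := by
    intro τ hτ
    have := hrefA qs hqsdeg τ hτ
    have hzero : (∑ i ∈ Finset.range k, |∫ s in (0:ℝ)..1, qs.eval s * s ^ i|) = 0 := by
      apply Finset.sum_eq_zero
      intro i hi
      rw [hqsmom i (Finset.mem_range.mp hi), abs_zero]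
    rw [hzero, hqs1] at this
    simpa using this
  refine ⟨CA * k + CA + 1, by positivity, ?_⟩
  intro a b hab δ hδ q hq hmm
  have hba : (0:ℝ) < b - a := by linarith
  have hbane : b - a ≠ 0 := ne_of_gt hba
  set lin : ℝ[X] := C (b - a) * X + C a with hlin
  have hlineval : ∀ τ : ℝ, lin.eval τ = (b - a) * τ + a := by intro τ; simp [hlin]
  set qhat : ℝ[X] := q.comp lin with hqhat
  have hqhateval : ∀ τ : ℝ, qhat.eval τ = q.eval ((b - a) * τ + a) := by
    intro τ; rw [hqhat, Polynomial.eval_comp, hlineval]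
  have hqhatdeg : qhat.natDegree ≤ k := by
    rw [hqhat, Polynomial.natDegree_comp, hlin, Polynomial.natDegree_linear hbane, mul_one]
    exact hq
  have hqhat1 : qhat.eval 1 = q.eval b := by rw [hqhateval]; ring_nf
  -- moments of qhat
  have hmomhat : ∀ i < k, |∫ τ in (0:ℝ)..1, qhat.eval τ * τ ^ i| ≤ δ := by
    intro i hi
    have hF : (∫ τ in (0:ℝ)..1, qhat.eval τ * τ ^ i)
        = (b - a)⁻¹ * ∫ t in a..b, q.eval t * ((t - a)/(b - a)) ^ i := by
      have hcomp := intervalIntegral.integral_comp_mul_add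
        (a := (0:ℝ)) (b := 1) (fun t => q.eval t * ((t - a)/(b - a)) ^ i) hbane a
      have he1 : (b - a) * 0 + a = a := by ring
      have he2 : (b - a) * 1 + a = b := by ring
      rw [he1, he2, smul_eq_mul] at hcomp
      rw [← hcomp]
      apply intervalIntegral.integral_congr
      intro τ _
      simp only []
      rw [hqhateval]
      congr 1
      rw [add_sub_cancel_right, mul_div_assoc, mul_comm]
      congr 1
      field_simp
    rw [hF, abs_mul, abs_inv, abs_of_pos hba]
    calc (b - a)⁻¹ * |∫ t in a..b, q.eval t * ((t - a)/(b - a)) ^ i|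
        ≤ (b - a)⁻¹ * ((b - a) * δ) := by
          apply mul_le_mul_of_nonneg_left (hmm i hi) (by positivity)
      _ = δ := by field_simp
  -- decomposition
  set u : ℝ[X] := qhat - C (q.eval b) * qs with hu
  have hudeg : u.natDegree ≤ k := by
    apply le_trans (Polynomial.natDegree_sub_le _ _)
    exact max_le hqhatdeg (le_trans (Polynomial.natDegree_C_mul_le _ _) hqsdeg)
  have humom : ∀ i < k, |∫ τ in (0:ℝ)..1, u.eval τ * τ ^ i| ≤ δ := by
    intro i hi
    have hev : ∀ τ : ℝ, u.eval τ * τ ^ i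
        = qhat.eval τ * τ ^ i - q.eval b * (qs.eval τ * τ ^ i) := by
      intro τ; rw [hu]; simp; ring
    simp_rw [hev]
    rw [intervalIntegral.integral_sub, intervalIntegral.integral_const_mul,
      hqsmom i hi, mul_zero, sub_zero]
    · exact hmomhat i hi
    · exact ((qhat.continuous).mul (continuous_pow i)).intervalIntegrable 0 1
    · apply IntervalIntegrable.const_mul
      exact ((qs.continuous).mul (continuous_pow i)).intervalIntegrable 0 1
  have hu1 : u.eval 1 = 0 := by
    rw [hu]; simp [hqhat1, hqs1]
  have hubd : ∀ τ ∈ Icc (0:ℝ) 1, |u.eval τ| ≤ CA * (k * δ) := by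
    intro τ hτ
    have := hrefA u hudeg τ hτ
    rw [hu1, abs_zero, add_zero] at this
    apply le_trans this
    apply mul_le_mul_of_nonneg_left _ (le_of_lt hCA)
    calc (∑ i ∈ Finset.range k, |∫ s in (0:ℝ)..1, u.eval s * s ^ i|)
        ≤ ∑ _i ∈ Finset.range k, δ :=
          Finset.sum_le_sum fun i hi => humom i (Finset.mem_range.mp hi)
      _ = k * δ := by rw [Finset.sum_const, Finset.card_range, nsmul_eq_mul]
  -- reconstruct q on the cell
  have hkey : ∀ t ∈ Icc a b, q.eval t = u.eval ((t - a)/(b - a))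
      + q.eval b * qs.eval ((t - a)/(b - a)) := by
    intro t _
    have harg : (b - a) * ((t - a)/(b - a)) + a = t := by field_simp; ring
    have : qhat.eval ((t - a)/(b - a)) = q.eval t := by rw [hqhateval, harg]
    rw [hu]
    simp only [Polynomial.eval_sub, Polynomial.eval_mul, Polynomial.eval_C]
    rw [this]; ring
  have hmem : ∀ t ∈ Icc a b, (t - a)/(b - a) ∈ Icc (0:ℝ) 1 := by
    intro t ht
    constructor
    · apply div_nonneg (by linarith [ht.1]) (le_of_lt hba)
    · rw [div_le_one hba]; linarith [ht.2]
  constructor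
  · intro t ht
    rw [hkey t ht]
    calc |u.eval ((t - a)/(b - a)) + q.eval b * qs.eval ((t - a)/(b - a))|
        ≤ |u.eval ((t - a)/(b - a))| + |q.eval b| * |qs.eval ((t - a)/(b - a))| := by
          rw [← abs_mul]; exact abs_add_le _ _
      _ ≤ CA * (k * δ) + |q.eval b| * CA := by
          apply add_le_add (hubd _ (hmem t ht))
          exact mul_le_mul_of_nonneg_left (hqsbd _ (hmem t ht)) (abs_nonneg _)
      _ ≤ (CA * k + CA + 1) * (δ + |q.eval b|) := by
          have h1 : (0:ℝ) ≤ |q.eval b| := abs_nonneg _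
          have h2 : (0:ℝ) ≤ (k:ℝ) := Nat.cast_nonneg k
          nlinarith [mul_nonneg (mul_nonneg hCA.le h2) h1, mul_nonneg hCA.le hδ,
            mul_nonneg hCA.le h1, hδ, h1]
  · have ha : a ∈ Icc a b := ⟨le_refl a, le_of_lt hab⟩
    rw [hkey a ha]
    have h0 : (a - a)/(b - a) = 0 := by rw [sub_self, zero_div]
    rw [h0]
    calc |u.eval 0 + q.eval b * qs.eval 0|
        ≤ |u.eval 0| + |q.eval b| * |qs.eval 0| := by
          rw [← abs_mul]; exact abs_add_le _ _
      _ = |u.eval 0| + |q.eval b| := by rw [hqsabs, mul_one]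
      _ ≤ CA * (k * δ) + |q.eval b| := by
          apply add_le_add_left (hubd 0 ⟨le_refl 0, zero_le_one⟩)
      _ ≤ |q.eval b| + (CA * k + CA + 1) * δ := by
          nlinarith [mul_nonneg hCA.le hδ, hδ]
lemma iDW_transfer {w : ℝ → ℝ} {k : ℕ} (hw : ContDiffOn ℝ (k+1) w (Icc (0:ℝ) 1))
    {a b : ℝ} (hab : a < b) (hsub : Icc a b ⊆ Icc (0:ℝ) 1) :
    ∀ i, i ≤ k + 1 → ∀ y ∈ Icc a b,
      iteratedDerivWithin i w (Icc a b) y = iteratedDerivWithin i w (Icc 0 1) y := by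
  have hud_ab : UniqueDiffOn ℝ (Icc a b) := uniqueDiffOn_Icc hab
  have hud01 : UniqueDiffOn ℝ (Icc (0:ℝ) 1) := uniqueDiffOn_Icc zero_lt_one
  intro i
  induction i with
  | zero => intro _ y hy; simp [iteratedDerivWithin_zero]
  | succ i ih =>
    intro hik y hy
    have hik' : i ≤ k + 1 := by omega
    have hdiff : DifferentiableWithinAt ℝ (iteratedDerivWithin i w (Icc (0:ℝ) 1))
        (Icc (0:ℝ) 1) y := by
      have hlt : (i : WithTop ℕ∞) < (k : WithTop ℕ∞) + 1 := by
        exact_mod_cast (show i < k + 1 by omega)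
      exact (hw.differentiableOn_iteratedDerivWithin hlt hud01) y (hsub hy)
    rw [iteratedDerivWithin_succ,
      derivWithin_congr (fun z hz => ih hik' z hz) (ih hik' y hy),
      derivWithin_subset hsub (hud_ab y hy) hdiff,
      ← iteratedDerivWithin_succ]

lemma taylor_cell {k : ℕ} {w : ℝ → ℝ} (hw : ContDiffOn ℝ (k+1) w (Icc (0:ℝ) 1)) {M : ℝ}
    (hM : ∀ i ≤ k + 1, ∀ t ∈ Icc (0:ℝ) 1, |iteratedDerivWithin i w (Icc 0 1) t| ≤ M)
    {a b : ℝ} (hab : a < b) (hsub : Icc a b ⊆ Icc (0:ℝ) 1) :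
    ∃ T : ℝ[X], T.natDegree ≤ k ∧ ∀ t ∈ Icc a b, |w t - T.eval t| ≤ M * (b - a) ^ (k+1) := by
  have hM0 : 0 ≤ M := le_trans (abs_nonneg _)
    (hM 0 (by omega) a (hsub ⟨le_refl a, hab.le⟩))
  set T : ℝ[X] := ∑ i ∈ Finset.range (k+1),
    C ((Nat.factorial i : ℝ)⁻¹ * iteratedDerivWithin i w (Icc a b) a) * (X - C a) ^ i with hT
  refine ⟨T, ?_, ?_⟩
  · apply Polynomial.natDegree_sum_le_of_forall_le
    intro i hi
    apply le_trans (Polynomial.natDegree_C_mul_le _ _)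
    apply le_trans (Polynomial.natDegree_pow_le)
    rw [Polynomial.natDegree_X_sub_C, mul_one]
    exact Nat.lt_succ_iff.mp (Finset.mem_range.mp hi)
  · intro t ht
    have hTeval : T.eval t = taylorWithinEval w k (Icc a b) a t := by
      rw [taylor_within_apply, hT, Polynomial.eval_finset_sum]
      apply Finset.sum_congr rfl
      intro i _
      simp only [Polynomial.eval_mul, Polynomial.eval_C, Polynomial.eval_pow,
        Polynomial.eval_sub, Polynomial.eval_X, smul_eq_mul]
      ring
    have hC : ∀ y ∈ Icc a b, ‖iteratedDerivWithin (k+1) w (Icc a b) y‖ ≤ M := by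
      intro y hy
      rw [Real.norm_eq_abs, iDW_transfer hw hab hsub (k+1) (le_refl _) y hy]
      exact hM (k+1) (le_refl _) y (hsub hy)
    have hbound := taylor_mean_remainder_bound (n := k) hab.le (hw.mono hsub) ht hC
    rw [hTeval]
    rw [Real.norm_eq_abs] at hbound
    apply le_trans hbound
    have hfac : (1:ℝ) ≤ (Nat.factorial k : ℝ) := by
      exact_mod_cast Nat.one_le_iff_ne_zero.mpr (Nat.factorial_ne_zero k)
    have hpow : (t - a) ^ (k+1) ≤ (b - a) ^ (k+1) := by
      apply pow_le_pow_left₀ (by linarith [ht.1]) (by linarith [ht.2])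
    calc M * (t - a) ^ (k+1) / (Nat.factorial k : ℝ) ≤ M * (t - a) ^ (k+1) := by
          apply div_le_self (mul_nonneg hM0 (pow_nonneg (by linarith [ht.1]) _)) hfac
      _ ≤ M * (b - a) ^ (k+1) := mul_le_mul_of_nonneg_left hpow hM0

/-- `L²` approximation property of the global projection `P^{(θ)}w`:
`‖w − P^{(θ)}w‖_{L²(I_j)} ≤ C h^{k+3/2} ‖w‖_{W^{k+1,∞}}`. -/
theorem stmt_13 (k : ℕ) (hk : 1 ≤ k) (θ : ℝ) (hθ1 : 1 / 2 < θ) (hθ2 : θ ≤ 1) :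
    ∃ C > 0, ∀ N : ℕ, 1 ≤ N → ∀ x : ℕ → ℝ, x 0 = 0 → x N = 1 →
      (∀ j, 1 ≤ j → j ≤ N → x (j - 1) < x j) →
      ∀ h : ℝ, (∀ j, 1 ≤ j → j ≤ N → x j - x (j - 1) ≤ h) →
      ∀ w : ℝ → ℝ, ContDiffOn ℝ (k + 1) w (Icc 0 1) →
      ∀ p : ℕ → Polynomial ℝ,
        (∀ j, 1 ≤ j → j ≤ N → (p j).natDegree ≤ k) →
        (∀ j, 1 ≤ j → j ≤ N → ∀ v : Polynomial ℝ, v.natDegree ≤ k - 1 →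
          (∫ t in (x (j - 1))..(x j), (p j).eval t * v.eval t) =
            ∫ t in (x (j - 1))..(x j), w t * v.eval t) →
        (∀ j, 1 ≤ j → j ≤ N - 1 →
          θ * (p j).eval (x j) + (1 - θ) * (p (j + 1)).eval (x j) = w (x j)) →
        (p N).eval (x N) = w (x N) →
      ∀ M : ℝ,
        (∀ i ≤ k + 1, ∀ t ∈ Icc (0:ℝ) 1, |iteratedDerivWithin i w (Icc 0 1) t| ≤ M) →
      ∀ j, 1 ≤ j → j ≤ N →
        Real.sqrt (∫ t in (x (j - 1))..(x j), (w t - (p j).eval t) ^ 2) ≤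
          C * h ^ ((k : ℝ) + 3 / 2) * M := by
  obtain ⟨Cc, hCc, hcell⟩ := cell_bound hk
  have hθ0 : 0 < θ := by linarith
  set ρ : ℝ := (1 - θ)/θ with hρdef
  have hρ0 : 0 ≤ ρ := by apply div_nonneg <;> linarith
  have hρ1 : ρ < 1 := by rw [hρdef, div_lt_one hθ0]; linarith
  set C2 : ℝ := 2 + Cc with hC2def
  have hC20 : 0 < C2 := by positivity
  set B0 : ℝ := ρ / (1 - ρ) * C2 with hB0def
  have hB00 : 0 ≤ B0 := by
    apply mul_nonneg _ hC20.le
    apply div_nonneg hρ0 (by linarith)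
  set C3 : ℝ := 1 + 2*Cc + Cc*B0 with hC3def
  have hC30 : 0 < C3 := by positivity
  refine ⟨C3, hC30, ?_⟩
  intro N hN x hx0 hxN hord h hh w hw p hpdeg hpmom hpif hpN M hM
  -- basic facts about the partition
  have hlow : ∀ j, j ≤ N → 0 ≤ x j := by
    intro j
    induction j with
    | zero => intro _; rw [hx0]
    | succ n ih =>
      intro hn
      have h1 := hord (n+1) (by omega) hn
      simp only [Nat.add_sub_cancel] at h1
      have h2 := ih (by omega)
      linarith
  have hupaux : ∀ d j, j + d = N → x j ≤ 1 := by
    intro d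
    induction d with
    | zero => intro j hj; rw [show j = N by omega, hxN]
    | succ d ih =>
      intro j hj
      have h1 := hord (j+1) (by omega) (by omega)
      simp only [Nat.add_sub_cancel] at h1
      have h2 := ih (j+1) (by omega)
      linarith
  have hup : ∀ j, j ≤ N → x j ≤ 1 := fun j hj => hupaux (N - j) j (by omega)
  have hh0 : 0 < h := by
    have h1 := hord 1 le_rfl hN
    have h2 := hh 1 le_rfl hN
    linarith
  have hM0 : 0 ≤ M := le_trans (abs_nonneg _) (hM 0 (by omega) 0 ⟨le_rfl, zero_le_one⟩)
  set ε : ℝ := M * h^(k+1) with hεdef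
  have hε0 : 0 ≤ ε := by positivity
  -- per-cell estimates
  have percell : ∀ j, 1 ≤ j → j ≤ N →
      (∀ t ∈ Icc (x (j-1)) (x j), |w t - (p j).eval t|
        ≤ ε + Cc*(2*ε + |(p j).eval (x j) - w (x j)|))
      ∧ |(p j).eval (x (j-1)) - w (x (j-1))|
        ≤ |(p j).eval (x j) - w (x j)| + (2 + Cc)*ε := by
    intro j hj1 hjN
    set a := x (j-1) with hadef
    set b := x j with hbdef
    have hab : a < b := hord j hj1 hjN
    have hsub : Icc a b ⊆ Icc (0:ℝ) 1 :=
      Icc_subset_Icc (hlow _ (by omega)) (hup j hjN)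
    obtain ⟨T, hTdeg, hTbd'⟩ := taylor_cell hw hM hab hsub
    have hba : b - a ≤ h := hh j hj1 hjN
    have hTbd : ∀ t ∈ Icc a b, |w t - T.eval t| ≤ ε := by
      intro t ht
      refine le_trans (hTbd' t ht) ?_
      have hpw : (b - a)^(k+1) ≤ h^(k+1) :=
        pow_le_pow_left₀ (by linarith) hba _
      exact mul_le_mul_of_nonneg_left hpw hM0
    set g : ℝ[X] := p j - T with hgdef
    have hgdeg : g.natDegree ≤ k := le_trans (Polynomial.natDegree_sub_le _ _)
      (max_le (hpdeg j hj1 hjN) hTdeg)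
    have hwcont : ContinuousOn w (Icc a b) := (hw.continuousOn).mono hsub
    -- moments of g
    have hgmom : ∀ i < k, |∫ t in a..b, g.eval t * ((t - a)/(b - a))^i| ≤ (b - a)*ε := by
      intro i hi
      set v : ℝ[X] := ((X - C a) * C (b - a)⁻¹)^i with hvdef
      have hvdeg : v.natDegree ≤ k - 1 := by
        apply le_trans (Polynomial.natDegree_pow_le)
        have h1 : ((X - C a) * C (b - a)⁻¹).natDegree ≤ 1 := by
          apply le_trans (Polynomial.natDegree_mul_le)
          simp [Polynomial.natDegree_X_sub_C]
        calc i * ((X - C a) * C (b - a)⁻¹).natDegree ≤ i * 1 := Nat.mul_le_mul_left i h1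
          _ = i := mul_one i
          _ ≤ k - 1 := by omega
      have hveval : ∀ t : ℝ, v.eval t = ((t - a)/(b - a))^i := by
        intro t; simp [hvdef, div_eq_mul_inv]
      have hvbd : ∀ t ∈ Icc a b, |v.eval t| ≤ 1 := by
        intro t ht
        rw [hveval, abs_pow]
        apply pow_le_one₀ (abs_nonneg _)
        rw [abs_le]
        constructor
        · have : 0 ≤ (t - a)/(b - a) := div_nonneg (by linarith [ht.1]) (by linarith)
          linarith
        · rw [div_le_one (by linarith)]; linarith [ht.2]
      have hintp : IntervalIntegrable (fun t => (p j).eval t * v.eval t)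
          MeasureTheory.volume a b :=
        (((p j).continuous).mul (v.continuous)).intervalIntegrable a b
      have hintT : IntervalIntegrable (fun t => T.eval t * v.eval t)
          MeasureTheory.volume a b :=
        ((T.continuous).mul (v.continuous)).intervalIntegrable a b
      have hintw : IntervalIntegrable (fun t => w t * v.eval t)
          MeasureTheory.volume a b := by
        apply ContinuousOn.intervalIntegrable
        rw [uIcc_of_le hab.le]
        exact hwcont.mul (v.continuousOn)
      have hmomv := hpmom j hj1 hjN v hvdeg
      have heq : (∫ t in a..b, g.eval t * ((t - a)/(b - a))^i)
          = ∫ t in a..b, (w t - T.eval t) * v.eval t := by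
        have h1 : (∫ t in a..b, g.eval t * ((t - a)/(b - a))^i)
            = ∫ t in a..b, ((p j).eval t * v.eval t - T.eval t * v.eval t) := by
          apply intervalIntegral.integral_congr
          intro t _
          simp only [hgdef, Polynomial.eval_sub]
          rw [hveval]; ring
        rw [h1, intervalIntegral.integral_sub hintp hintT, hmomv,
          ← intervalIntegral.integral_sub hintw hintT]
        apply intervalIntegral.integral_congr
        intro t _
        simp only []
        ring
      rw [heq]
      have hbound := intervalIntegral.norm_integral_le_of_norm_le_const
        (C := ε) (f := fun t => (w t - T.eval t) * v.eval t) (a := a) (b := b) ?_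
      · rw [Real.norm_eq_abs] at hbound
        rw [abs_of_pos (by linarith : (0:ℝ) < b - a)] at hbound
        linarith [hbound]
      · intro t ht
        rw [uIoc_of_le hab.le] at ht
        have htm : t ∈ Icc a b := ⟨ht.1.le, ht.2⟩
        rw [Real.norm_eq_abs, abs_mul]
        calc |w t - T.eval t| * |v.eval t| ≤ ε * 1 :=
            mul_le_mul (hTbd t htm) (hvbd t htm) (abs_nonneg _) hε0
          _ = ε := mul_one ε
    obtain ⟨hsup, hleft⟩ := hcell a b hab ε hε0 g hgdeg hgmom
    have hgb : |g.eval b| ≤ |(p j).eval b - w b| + ε := by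
      have : g.eval b = ((p j).eval b - w b) + (w b - T.eval b) := by
        simp only [hgdef, Polynomial.eval_sub]; ring
      rw [this]
      apply le_trans (abs_add_le _ _)
      apply add_le_add_right (hTbd b ⟨hab.le, le_rfl⟩)
    constructor
    · intro t ht
      have hdec : w t - (p j).eval t = (w t - T.eval t) - g.eval t := by
        simp only [hgdef, Polynomial.eval_sub]; ring
      rw [hdec]
      apply le_trans (abs_sub _ _)
      have h2 := hsup t ht
      have h3 : Cc * (ε + |g.eval b|) ≤ Cc * (2*ε + |(p j).eval b - w b|) := by
        apply mul_le_mul_of_nonneg_left _ hCc.le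
        linarith [hgb]
      linarith [hTbd t ht]
    · have hdec : (p j).eval a - w a = g.eval a + (T.eval a - w a) := by
        simp only [hgdef, Polynomial.eval_sub]; ring
      rw [hdec]
      apply le_trans (abs_add_le _ _)
      have h1 : |T.eval a - w a| ≤ ε := by
        rw [abs_sub_comm]; exact hTbd a ⟨le_rfl, hab.le⟩
      have h2 : |g.eval a| ≤ |(p j).eval b - w b| + ε + Cc * ε := by
        apply le_trans hleft
        linarith [hgb]
      linarith
  -- backward recursion for interface errors
  have hA : ∀ d j, 1 ≤ j → j + d = N →
      |(p j).eval (x j) - w (x j)| ≤ B0 * ε := by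
    intro d
    induction d with
    | zero =>
      intro j hj1 hjN
      rw [show j = N by omega]
      rw [hpN, sub_self, abs_zero]
      positivity
    | succ d ih =>
      intro j hj1 hjN
      have hintf := hpif j hj1 (by omega)
      have hstep : (p j).eval (x j) - w (x j)
          = -ρ * ((p (j+1)).eval (x j) - w (x j)) := by
        rw [hρdef]
        field_simp
        linarith [hintf]
      have hAn : |(p (j+1)).eval (x (j+1)) - w (x (j+1))| ≤ B0 * ε :=
        ih (j+1) (by omega) (by omega)
      have hlft := (percell (j+1) (by omega) (by omega)).2
      simp only [Nat.add_sub_cancel] at hlft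
      have hbd : |(p (j+1)).eval (x j) - w (x j)| ≤ B0 * ε + (2 + Cc) * ε := by
        apply le_trans hlft
        linarith [hAn]
      rw [hstep, abs_mul, abs_neg, abs_of_nonneg hρ0]
      have halg : ρ * (B0 * ε + (2 + Cc) * ε) = B0 * ε := by
        rw [hB0def, hC2def]
        have h1ρ : (1:ℝ) - ρ ≠ 0 := by linarith
        field_simp
        ring
      calc ρ * |(p (j+1)).eval (x j) - w (x j)|
          ≤ ρ * (B0 * ε + (2 + Cc) * ε) := mul_le_mul_of_nonneg_left hbd hρ0
        _ = B0 * ε := halg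
  -- final estimate
  intro j hj1 hjN
  set a := x (j-1) with hadef
  set b := x j with hbdef
  have hab : a < b := hord j hj1 hjN
  have hsub : Icc a b ⊆ Icc (0:ℝ) 1 :=
    Icc_subset_Icc (hlow _ (by omega)) (hup j hjN)
  have hAj : |(p j).eval b - w b| ≤ B0 * ε := hA (N - j) j hj1 (by omega)
  have hsupj := (percell j hj1 hjN).1
  set S : ℝ := C3 * ε with hSdef
  have hS0 : 0 ≤ S := by positivity
  have hsupS : ∀ t ∈ Icc a b, |w t - (p j).eval t| ≤ S := by
    intro t ht
    apply le_trans (hsupj t ht)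
    rw [hSdef, hC3def]
    nlinarith [hCc.le, hε0, hAj, mul_le_mul_of_nonneg_left hAj hCc.le]
  have hintg : IntervalIntegrable (fun t => (w t - (p j).eval t)^2)
      MeasureTheory.volume a b := by
    apply ContinuousOn.intervalIntegrable
    rw [uIcc_of_le hab.le]
    exact (((hw.continuousOn).mono hsub).sub ((p j).continuous.continuousOn)).pow 2
  have hIle : (∫ t in a..b, (w t - (p j).eval t)^2) ≤ (b - a) * S^2 := by
    have h1 : (∫ t in a..b, (w t - (p j).eval t)^2) ≤ ∫ _t in a..b, S^2 := by
      apply intervalIntegral.integral_mono_on hab.le hintg (intervalIntegrable_const)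
      intro t ht
      rw [← sq_abs]
      exact pow_le_pow_left₀ (abs_nonneg _) (hsupS t ht) 2
    rw [intervalIntegral.integral_const, smul_eq_mul] at h1
    exact h1
  have hstep2 : (b - a) * S^2 ≤ h * S^2 :=
    mul_le_mul_of_nonneg_right (hh j hj1 hjN) (sq_nonneg S)
  calc Real.sqrt (∫ t in a..b, (w t - (p j).eval t)^2)
      ≤ Real.sqrt (h * S^2) := Real.sqrt_le_sqrt (le_trans hIle hstep2)
    _ = Real.sqrt h * S := by
        rw [Real.sqrt_mul hh0.le, Real.sqrt_sq hS0]
    _ = C3 * h ^ ((k : ℝ) + 3 / 2) * M := by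
        have hps : h ^ ((k:ℝ) + 3/2) = h^(k+1) * Real.sqrt h := by
          rw [Real.sqrt_eq_rpow, ← Real.rpow_natCast h (k+1), ← Real.rpow_add hh0]
          congr 1
          push_cast
          ring
        rw [hps, hSdef, hεdef]
        ring
end
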